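/- arXiv:0707.2562 — 11 statements merged into one kernel-verified Lean document; each statement's English description precedes it below -/
import Mathlib

section
/- If a digraph H dismantles to an induced subgraph B (obtainable by successively removing dominated vertices), then B is a retract of H, i.e., there is a homomorphism H → B that restricts to the identity on B. -/
def Hom {α β : Type*} (E : α → α → Prop) (F : β → β → Prop) (f : α → β) : Prop :=
  ∀ u v, E u v → F (f u) (f v)

/-- `y` dominates `x` in the subgraph of `(α, E)` induced on `S`. -/
def Dominates {α : Type*} (E : α → α → Prop) (S : Set α) (y x : α) : Prop :=
  y ≠ x ∧ (E x x → E y y) ∧ ∀ z ∈ S, (E x z → E y z) ∧ (E z x → E z y)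

/-- `(α, E)` restricted to `S` dismantles to its induced subgraph on `T`. -/
inductive Dismantles {α : Type*} (E : α → α → Prop) : Set α → Set α → Prop
  | refl (S : Set α) : Dismantles E S S
  | step {S T : Set α} (x : α) (hx : x ∈ S)
      (hdom : ∃ y ∈ S, Dominates E S y x)
      (h : Dismantles E (S \ {x}) T) : Dismantles E S T

lemma Dismantles.subset {α : Type*} {E : α → α → Prop} {S T : Set α}
    (h : Dismantles E S T) : T ⊆ S := by
  induction h with
  | refl S => exact subset_rfl
  | step x hx hdom h ih => exact ih.trans Set.diff_subset

lemma Dismantles.retract {α : Type*} {E : α → α → Prop} {S T : Set α}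
    (h : Dismantles E S T) :
    ∃ ρ : α → α, (∀ u ∈ S, ∀ v ∈ S, E u v → E (ρ u) (ρ v)) ∧
      (∀ z ∈ S, ρ z ∈ T) ∧ (∀ b ∈ T, ρ b = b) := by
  classical
  induction h with
  | refl U => exact ⟨id, fun u _ v _ e => e, fun z hz => hz, fun b _ => rfl⟩
  | step x hx hdom h ih =>
    obtain ⟨ρ, hhom, hmem, hfix⟩ := ih
    obtain ⟨y, hyS, hyx, hEd, hz⟩ := hdom
    have hyS' := Set.mem_diff_singleton.mpr ⟨hyS, hyx⟩
    refine ⟨fun u => ρ (if u = x then y else u), ?_, ?_, ?_⟩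
    · intro u hu v hv e
      by_cases hux : u = x
      · by_cases hvx : v = x
        · subst hux; subst hvx
          simpa using hhom y hyS' y hyS' (hEd e)
        · subst hux
          simp only [if_pos rfl, if_neg hvx]
          exact hhom y hyS' v ⟨hv, hvx⟩ ((hz v hv).1 e)
      · by_cases hvx : v = x
        · subst hvx
          simp only [if_pos rfl, if_neg hux]
          exact hhom u ⟨hu, hux⟩ y hyS' ((hz u hu).2 e)
        · simp only [if_neg hux, if_neg hvx]
          exact hhom u ⟨hu, hux⟩ v ⟨hv, hvx⟩ e
    · intro z hzS
      by_cases hzx : z = x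
      · simp only [if_pos hzx]; exact hmem y hyS'
      · simp only [if_neg hzx]; exact hmem z ⟨hzS, hzx⟩
    · intro b hb
      have hbx : b ≠ x := (h.subset hb).2
      simp only [if_neg hbx]; exact hfix b hb

/-- If a digraph `H = (V, E)` dismantles to an induced subgraph `B`, then `B` is a retract
of `H`: there is a homomorphism `H → B` fixing `B` pointwise. -/
theorem stmt1 {V : Type*} (E : V → V → Prop) (B : Set V)
    (h : Dismantles E Set.univ B) :
    ∃ ρ : V → V, Hom E E ρ ∧ (∀ z, ρ z ∈ B) ∧ ∀ b ∈ B, ρ b = b := by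
  obtain ⟨ρ, hhom, hmem, hfix⟩ := h.retract
  exact ⟨ρ, fun u v e => hhom u trivial v trivial e, fun z => hmem z trivial, hfix⟩
end

section
/- Greedy dismantling: if a digraph H dismantles to an induced subgraph B, and a is any dominated vertex of H not in B, then the induced subgraph of H on V(H) \ {a} also dismantles to B. -/
lemma dom_mono {α : Type*} {E : α → α → Prop} {S S' : Set α} (hS : S' ⊆ S) {y x : α}
    (h : Dominates E S y x) : Dominates E S' y x :=
  ⟨h.1, h.2.1, fun z hz => h.2.2 z (hS hz)⟩

lemma dom_trans {α : Type*} {E : α → α → Prop} {S : Set α} {y x w : α}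
    (h1 : Dominates E S y x) (h2 : Dominates E S x w) (hyw : y ≠ w) :
    Dominates E S y w :=
  ⟨hyw, fun h => h1.2.1 (h2.2.1 h), fun z hz =>
    ⟨fun h => (h1.2.2 z hz).1 ((h2.2.2 z hz).1 h),
     fun h => (h1.2.2 z hz).2 ((h2.2.2 z hz).2 h)⟩⟩

/-- Twin-swap: if `a ∈ S` and `x ∉ S` are "true twins" (same in/out neighbourhoods on
`insert x S`), and `S` dismantles to `T` with `a ∉ T`, then replacing `a` by `x`
still dismantles to `T`. -/
lemma swap_twin {α : Type*} {E : α → α → Prop} {S T : Set α}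
    (h : Dismantles E S T) :
    ∀ a x, a ∈ S → x ∉ S → a ∉ T →
    (∀ z ∈ insert x S, (E a z ↔ E x z) ∧ (E z a ↔ E z x)) →
    Dismantles E (insert x (S \ {a})) T := by
  induction h with
  | refl S => intro a x haS _ haT _; exact absurd haS haT
  | @step S T v hv hdom h ih =>
    intro a x haS hxS haT htw
    have hax : a ≠ x := fun hh => hxS (hh ▸ haS)
    -- key twin facts
    have haa : E a a ↔ E x x := by
      constructor
      · intro hh
        have h1 : E x a := (htw a (Set.mem_insert_of_mem _ haS)).1.1 hh
        exact (htw x (Set.mem_insert _ _)).2.1 h1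
      · intro hh
        have h1 : E x a := (htw x (Set.mem_insert _ _)).2.2 hh
        exact (htw a (Set.mem_insert_of_mem _ haS)).1.2 h1
    rcases eq_or_ne v a with rfl | hva
    · -- the original sequence deletes `v`; we delete `x` instead, then both sets agree
      obtain ⟨y, hyS, hyd⟩ := hdom
      have hya : y ≠ v := hyd.1
      have hyU : y ∈ insert x (S \ {v}) :=
        Set.mem_insert_of_mem _ ⟨hyS, hya⟩
      have hdx : Dominates E (insert x (S \ {v})) y x := by
        refine ⟨fun hh => hxS (hh ▸ hyS), fun hh => hyd.2.1 (haa.2 hh), ?_⟩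
        intro z hz
        rcases hz with rfl | ⟨hzS, hza⟩
        · -- z = x
          constructor
          · intro hh
            have h1 : E y v := (hyd.2.2 v haS).1 (haa.2 hh)
            exact (htw y (Set.mem_insert_of_mem _ hyS)).2.1 h1
          · intro hh
            have h1 : E v y := (hyd.2.2 v haS).2 (haa.2 hh)
            exact (htw y (Set.mem_insert_of_mem _ hyS)).1.1 h1
        · constructor
          · intro hh
            exact (hyd.2.2 z hzS).1 ((htw z (Set.mem_insert_of_mem _ hzS)).1.2 hh)
          · intro hh
            exact (hyd.2.2 z hzS).2 ((htw z (Set.mem_insert_of_mem _ hzS)).2.2 hh)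
      have hset : insert x (S \ {v}) \ {x} = S \ {v} := by
        ext z
        simp only [Set.mem_diff, Set.mem_insert_iff, Set.mem_singleton_iff]
        constructor
        · rintro ⟨rfl | hz, hzx⟩
          · exact absurd rfl hzx
          · exact hz
        · intro hz
          exact ⟨Or.inr hz, fun hh => hxS (hh ▸ hz.1)⟩
      exact Dismantles.step x (Set.mem_insert _ _) ⟨y, hyU, hdx⟩ (by rw [hset]; exact h)
    · -- the original sequence deletes `v ≠ a`; we delete `v` too
      obtain ⟨y, hyS, hyd⟩ := hdom
      have hvx : v ≠ x := fun hh => hxS (hh ▸ hv)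
      have hvU : v ∈ insert x (S \ {a}) := Set.mem_insert_of_mem _ ⟨hv, hva⟩
      -- witness dominating v in the new set
      have hwit : ∃ w ∈ insert x (S \ {a}), Dominates E (insert x (S \ {a})) w v := by
        rcases eq_or_ne y a with rfl | hya
        · -- witness was `y`; use `x` instead
          refine ⟨x, Set.mem_insert _ _, fun hh => (hh ▸ hvx) rfl,
            fun hh => haa.1 (hyd.2.1 hh), ?_⟩
          intro z hz
          rcases hz with rfl | ⟨hzS, hza⟩
          · -- z = x
            constructor
            · intro hh
              have h1 : E v y := (htw v (Set.mem_insert_of_mem _ hv)).2.2 hh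
              exact haa.1 ((hyd.2.2 y haS).1 h1)
            · intro hh
              have h1 : E y v := (htw v (Set.mem_insert_of_mem _ hv)).1.2 hh
              exact haa.1 ((hyd.2.2 y haS).2 h1)
          · constructor
            · intro hh
              exact (htw z (Set.mem_insert_of_mem _ hzS)).1.1 ((hyd.2.2 z hzS).1 hh)
            · intro hh
              exact (htw z (Set.mem_insert_of_mem _ hzS)).2.1 ((hyd.2.2 z hzS).2 hh)
        · -- witness y ≠ a survives
          refine ⟨y, Set.mem_insert_of_mem _ ⟨hyS, hya⟩, hyd.1, hyd.2.1, ?_⟩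
          intro z hz
          rcases hz with rfl | ⟨hzS, hza⟩
          · -- z = x : transfer from z = a via twins
            constructor
            · intro hh
              have h1 : E v a := (htw v (Set.mem_insert_of_mem _ hv)).2.2 hh
              exact ((htw y (Set.mem_insert_of_mem _ hyS)).2.1) ((hyd.2.2 a haS).1 h1)
            · intro hh
              have h1 : E a v := (htw v (Set.mem_insert_of_mem _ hv)).1.2 hh
              exact ((htw y (Set.mem_insert_of_mem _ hyS)).1.1) ((hyd.2.2 a haS).2 h1)
          · exact hyd.2.2 z hzS
      have hset : insert x (S \ {a}) \ {v} = insert x ((S \ {v}) \ {a}) := by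
        ext z
        simp only [Set.mem_diff, Set.mem_insert_iff, Set.mem_singleton_iff]
        constructor
        · rintro ⟨rfl | ⟨hz, hza⟩, hzv⟩
          · exact Or.inl rfl
          · exact Or.inr ⟨⟨hz, hzv⟩, hza⟩
        · rintro (rfl | ⟨⟨hz, hzv⟩, hza⟩)
          · exact ⟨Or.inl rfl, fun hh => hvx hh.symm⟩
          · exact ⟨Or.inr ⟨hz, hza⟩, fun hh => hzv hh⟩
      have hrec : Dismantles E (insert x ((S \ {v}) \ {a})) T := by
        refine ih a x ⟨haS, fun hh => hva hh.symm⟩ (fun hh => hxS hh.1) haT ?_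
        intro z hz
        rcases hz with rfl | hz
        · exact htw z (Set.mem_insert _ _)
        · exact htw z (Set.mem_insert_of_mem _ hz.1)
      exact Dismantles.step v hvU hwit (hset ▸ hrec)

lemma greedy {α : Type*} {E : α → α → Prop} {S T : Set α} (h : Dismantles E S T) :
    ∀ a, a ∈ S → a ∉ T → (∃ y ∈ S, Dominates E S y a) →
    Dismantles E (S \ {a}) T := by
  induction h with
  | refl S => intro a ha hnt _; exact absurd ha hnt
  | @step S T x hx hdom h ih =>
    intro a haS haT hda
    obtain ⟨y, hyS, hyd⟩ := hda
    rcases eq_or_ne x a with rfl | hxa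
    · exact h
    · obtain ⟨y', hy'S, hy'd⟩ := hdom
      by_cases htwin : y = x ∧ y' = a
      · -- a and x are twins
        obtain ⟨rfl, rfl⟩ := htwin
        have htw : ∀ z ∈ insert y (S \ {y}), (E y' z ↔ E y z) ∧ (E z y' ↔ E z y) := by
          intro z hz
          have hzS : z ∈ S := by
            rcases hz with rfl | hz
            · exact hx
            · exact hz.1
          exact ⟨⟨fun hh => (hyd.2.2 z hzS).1 hh, fun hh => (hy'd.2.2 z hzS).1 hh⟩,
                 ⟨fun hh => (hyd.2.2 z hzS).2 hh, fun hh => (hy'd.2.2 z hzS).2 hh⟩⟩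
        have hres := swap_twin h y' y ⟨haS, fun hh => hxa hh.symm⟩
          (fun hh => hh.2 rfl) haT htw
        have hset : insert y ((S \ {y}) \ {y'}) = S \ {y'} := by
          ext z
          simp only [Set.mem_insert_iff, Set.mem_diff, Set.mem_singleton_iff]
          constructor
          · rintro (rfl | ⟨⟨hz, _⟩, hz'⟩)
            · exact ⟨hx, hxa⟩
            · exact ⟨hz, hz'⟩
          · rintro ⟨hz, hz'⟩
            rcases eq_or_ne z y with rfl | hzy
            · exact Or.inl rfl
            · exact Or.inr ⟨⟨hz, hzy⟩, hz'⟩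
        exact hset ▸ hres
      · -- not twins: produce u ≠ x dominating a, and w ≠ a dominating x, both in S
        have hexu : ∃ u, u ≠ x ∧ Dominates E S u a ∧ u ∈ S := by
          rcases eq_or_ne y x with rfl | hyx
          · -- y = x, so y' ≠ a (else twins)
            have hy'a : y' ≠ a := fun hh => htwin ⟨rfl, hh⟩
            exact ⟨y', hy'd.1, dom_trans hy'd hyd hy'a, hy'S⟩
          · exact ⟨y, hyx, hyd, hyS⟩
        have hexw : ∃ w, w ≠ a ∧ Dominates E S w x ∧ w ∈ S := by
          rcases eq_or_ne y' a with rfl | hy'a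
          · -- y' = a, so y ≠ x (else twins)
            have hyx : y ≠ x := fun hh => htwin ⟨hh, rfl⟩
            exact ⟨y, hyd.1, dom_trans hyd hy'd hyx, hyS⟩
          · exact ⟨y', hy'a, hy'd, hy'S⟩
        obtain ⟨u, hux, hud, huS⟩ := hexu
        obtain ⟨w, hwa, hwd, hwS⟩ := hexw
        have hrec : Dismantles E ((S \ {x}) \ {a}) T :=
          ih a ⟨haS, fun hh => hxa hh.symm⟩ haT
            ⟨u, ⟨huS, hux⟩, dom_mono Set.diff_subset hud⟩
        have hset : (S \ {a}) \ {x} = (S \ {x}) \ {a} := Set.diff_diff_comm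
        exact Dismantles.step x ⟨hx, hxa⟩
          ⟨w, ⟨hwS, hwa⟩, dom_mono Set.diff_subset hwd⟩ (hset ▸ hrec)

/-- Greedy dismantling: if `H = (V, E)` dismantles to `B` and `a ∉ B` is any dominated
vertex of `H`, then the induced subgraph on `V \ {a}` also dismantles to `B`. -/
theorem stmt2 {V : Type*} (E : V → V → Prop) (B : Set V) (a : V)
    (h : Dismantles E Set.univ B) (haB : a ∉ B)
    (ha : ∃ y, Dominates E Set.univ y a) :
    Dismantles E ({a}ᶜ) B := by
  obtain ⟨y, hy⟩ := ha
  have := greedy h a (Set.mem_univ a) haB ⟨y, Set.mem_univ y, hy⟩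
  have hset : (Set.univ : Set V) \ {a} = {a}ᶜ := by
    ext z; simp
  exact hset ▸ this
end

section
/- If a digraph H dismantles to two induced subgraphs C and C', neither of which contains any dominated vertex, then C and C' are isomorphic as digraphs. -/
namespace Stmt3Aux

variable {V : Type*} {E : V → V → Prop}

/-- Isomorphism of induced subgraphs. -/
def DIso (E : V → V → Prop) (S T : Set V) : Prop :=
  ∃ f : V → V, Set.BijOn f S T ∧ ∀ u ∈ S, ∀ v ∈ S, (E u v ↔ E (f u) (f v))

/-- No dominated vertex. -/
def Stiff (E : V → V → Prop) (S : Set V) : Prop :=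
  ∀ x ∈ S, ¬ ∃ y ∈ S, Dominates E S y x

theorem DIso.refl (S : Set V) : DIso E S S :=
  ⟨id, Set.bijOn_id S, fun _ _ _ _ => Iff.rfl⟩

theorem DIso.trans {S T U : Set V} (h1 : DIso E S T) (h2 : DIso E T U) : DIso E S U := by
  obtain ⟨f, hf, hfe⟩ := h1
  obtain ⟨g, hg, hge⟩ := h2
  exact ⟨g ∘ f, hg.comp hf, fun u hu v hv =>
    (hfe u hu v hv).trans (hge _ (hf.1 hu) _ (hf.1 hv))⟩

theorem DIso.symm {S T : Set V} (h : DIso E S T) : DIso E T S := by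
  obtain ⟨f, hf, hfe⟩ := h
  cases isEmpty_or_nonempty V with
  | inl hemp =>
    refine ⟨id, ⟨fun x hx => absurd trivial (IsEmpty.false x).elim, ?_, ?_⟩, ?_⟩
    · intro x hx; exact (IsEmpty.false x).elim
    · intro x hx; exact (IsEmpty.false x).elim
    · intro u hu; exact (IsEmpty.false u).elim
  | inr hne =>
    set g := Function.invFunOn f S with hg
    have hinv : Set.InvOn g f S T := hf.invOn_invFunOn
    refine ⟨g, hinv.symm.bijOn (hf.surjOn.mapsTo_invFunOn) hf.mapsTo, ?_⟩
    intro u hu v hv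
    have hgu : g u ∈ S := hf.surjOn.mapsTo_invFunOn hu
    have hgv : g v ∈ S := hf.surjOn.mapsTo_invFunOn hv
    have := hfe (g u) hgu (g v) hgv
    rw [hinv.2 hu, hinv.2 hv] at this
    exact this.symm

theorem dominates_mono {S T : Set V} {y x : V} (h : Dominates E S y x) (hTS : T ⊆ S) :
    Dominates E T y x :=
  ⟨h.1, h.2.1, fun z hz => h.2.2 z (hTS hz)⟩

theorem dominates_trans {S : Set V} {x y z : V} (h1 : Dominates E S y x)
    (h2 : Dominates E S z y) (hzx : z ≠ x) : Dominates E S z x := by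
  refine ⟨hzx, fun h => h2.2.1 (h1.2.1 h), fun w hw => ?_⟩
  exact ⟨fun h => (h2.2.2 w hw).1 ((h1.2.2 w hw).1 h),
    fun h => (h2.2.2 w hw).2 ((h1.2.2 w hw).2 h)⟩

theorem stiff_of_diso {S T : Set V} (h : DIso E S T) (hs : Stiff E S) : Stiff E T := by
  obtain ⟨g, hg, hge⟩ := h.symm
  rintro u hu ⟨v, hv, hd⟩
  refine hs (g u) (hg.1 hu) ⟨g v, hg.1 hv, ?_, ?_, ?_⟩
  · exact fun h => hd.1 (hg.injOn hv hu h)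
  · intro h
    exact (hge v hv v hv).mp (hd.2.1 ((hge u hu u hu).mpr h))
  · intro z hz
    obtain ⟨w, hw, rfl⟩ := hg.surjOn hz
    constructor
    · intro h
      exact (hge v hv w hw).mp ((hd.2.2 w hw).1 ((hge u hu w hw).mpr h))
    · intro h
      exact (hge w hw v hv).mp ((hd.2.2 w hw).2 ((hge w hw u hu).mpr h))

/-- Dismantling transports along isomorphisms. -/
theorem dismantles_transport {S C : Set V} (h : Dismantles E S C) :
    ∀ T : Set V, DIso E S T → ∃ D, Dismantles E T D ∧ DIso E C D := by
  induction h with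
  | refl S => exact fun T hT => ⟨T, Dismantles.refl T, hT⟩
  | step x hx hdom h ih =>
    rename_i S _
    intro T hT
    obtain ⟨f, hf, hfe⟩ := hT
    obtain ⟨y, hy, hd⟩ := hdom
    have hdom' : Dominates E T (f y) (f x) := by
      refine ⟨fun h => hd.1 (hf.injOn hy hx h), ?_, ?_⟩
      · intro h
        exact (hfe y hy y hy).mp (hd.2.1 ((hfe x hx x hx).mpr h))
      · intro z hz
        obtain ⟨w, hw, rfl⟩ := hf.surjOn hz
        exact ⟨fun h => (hfe y hy w hw).mp ((hd.2.2 w hw).1 ((hfe x hx w hw).mpr h)),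
          fun h => (hfe w hw y hy).mp ((hd.2.2 w hw).2 ((hfe w hw x hx).mpr h))⟩
    have hiso' : DIso E (S \ {x}) (T \ {f x}) := by
      refine ⟨f, ⟨?_, hf.injOn.mono Set.diff_subset, ?_⟩, ?_⟩
      · rintro u ⟨hu, hux⟩
        exact ⟨hf.1 hu, fun h => hux (hf.injOn hu hx h)⟩
      · rintro z ⟨hz, hzx⟩
        obtain ⟨w, hw, rfl⟩ := hf.surjOn hz
        exact ⟨w, ⟨hw, fun h => hzx (by rw [Set.mem_singleton_iff] at h ⊢; rw [h])⟩, rfl⟩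
      · intro u hu v hv
        exact hfe u hu.1 v hv.1
    obtain ⟨D, hD, hCD⟩ := ih (T \ {f x}) hiso'
    exact ⟨D, Dismantles.step (f x) (hf.1 hx) ⟨f y, hf.1 hy, hdom'⟩ hD, hCD⟩

theorem stiff_dismantles_eq {S C : Set V} (h : Dismantles E S C) (hs : Stiff E S) : C = S := by
  cases h with
  | refl => rfl
  | step x hx hdom h => exact absurd hdom (hs x hx)

/-- Key lemma: if `S` dismantles to `C` and `x'` is dominated in `S`, then `S \\ {x'}`
dismantles to a graph isomorphic to `C`. -/
theorem key : ∀ {S C : Set V}, Dismantles E S C → Stiff E C →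
    ∀ x' ∈ S, (∃ y' ∈ S, Dominates E S y' x') →
      ∃ D, Dismantles E (S \ {x'}) D ∧ DIso E C D := by
  intro S C h
  induction h with
  | refl S =>
    intro hC x' hx' hdom
    exact absurd hdom (hC x' hx')
  | @step S T x hx hdom h ih =>
    intro hC x' hx' hdom'
    classical
    obtain ⟨y, hy, hdy⟩ := hdom
    obtain ⟨y', hy', hdy'⟩ := hdom'
    by_cases hxx : x = x'
    · subst hxx
      exact ⟨_, h, DIso.refl _⟩
    by_cases hbad : y = x' ∧ y' = x
    · -- mutual domination: swap isomorphism
      rw [hbad.1] at hdy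
      rw [hbad.2] at hdy'
      -- hdy : Dominates E S x' x ; hdy' : Dominates E S x x'
      have hswap : DIso E (S \ {x}) (S \ {x'}) := by
        set f : V → V := (fun z => if z = x' then x else z) with hfdef
        have hfx' : f x' = x := if_pos rfl
        have hfz : ∀ z, z ≠ x' → f z = z := fun z hz => if_neg hz
        refine ⟨f, ⟨?_, ?_, ?_⟩, ?_⟩
        · rintro u ⟨hu, hux⟩
          simp only [Set.mem_singleton_iff] at hux
          by_cases h' : u = x'
          · rw [h', hfx']
            exact ⟨hx, fun hc => hxx (Set.mem_singleton_iff.mp hc)⟩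
          · rw [hfz u h']
            exact ⟨hu, h'⟩
        · rintro u ⟨hu, hux⟩ v ⟨hv, hvx⟩ huv
          simp only [Set.mem_singleton_iff] at hux hvx
          by_cases h1 : u = x' <;> by_cases h2 : v = x'
          · rw [h1, h2]
          · rw [h1, hfx', hfz v h2] at huv
            exact absurd huv.symm hvx
          · rw [h2, hfx', hfz u h1] at huv
            exact absurd huv hux
          · rwa [hfz u h1, hfz v h2] at huv
        · rintro w ⟨hw, hwx'⟩
          simp only [Set.mem_singleton_iff] at hwx'
          by_cases h' : w = x
          · refine ⟨x', ⟨?_, ?_⟩, ?_⟩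
            · rw [← hbad.1]; exact hy
            · simp only [Set.mem_singleton_iff]
              exact fun hc => hxx hc.symm
            · rw [hfx', h']
          · exact ⟨w, ⟨hw, h'⟩, hfz w hwx'⟩
        · rintro u ⟨hu, hux⟩ v ⟨hv, hvx⟩
          by_cases h1 : u = x' <;> by_cases h2 : v = x'
          · rw [h1, h2, hfx']
            exact ⟨hdy'.2.1, hdy.2.1⟩
          · rw [h1, hfx', hfz v h2]
            exact ⟨fun hh => (hdy'.2.2 v hv).1 hh, fun hh => (hdy.2.2 v hv).1 hh⟩
          · rw [h2, hfx', hfz u h1]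
            exact ⟨fun hh => (hdy'.2.2 u hu).2 hh, fun hh => (hdy.2.2 u hu).2 hh⟩
          · rw [hfz u h1, hfz v h2]
      exact dismantles_transport h _ hswap
    · -- diamond case
      push_neg at hbad
      have hd1 : ∃ w ∈ S \ {x}, Dominates E (S \ {x}) w x' := by
        by_cases hy'x : y' = x
        · have hyx' : y ≠ x' := fun hc => (hbad hc) hy'x
          rw [hy'x] at hdy'
          -- hdy' : Dominates E S x x'
          have htr : Dominates E S y x' := dominates_trans hdy' hdy hyx'
          exact ⟨y, ⟨hy, hdy.1⟩, dominates_mono htr Set.diff_subset⟩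
        · exact ⟨y', ⟨hy', hy'x⟩, dominates_mono hdy' Set.diff_subset⟩
      have hd2 : ∃ w ∈ S \ {x'}, Dominates E (S \ {x'}) w x := by
        by_cases hyx' : y = x'
        · have hy'x : y' ≠ x := hbad hyx'
          rw [hyx'] at hdy
          -- hdy : Dominates E S x' x
          have htr : Dominates E S y' x := dominates_trans hdy hdy' hy'x
          exact ⟨y', ⟨hy', hdy'.1⟩, dominates_mono htr Set.diff_subset⟩
        · exact ⟨y, ⟨hy, hyx'⟩, dominates_mono hdy Set.diff_subset⟩
      obtain ⟨D, hD, hCD⟩ :=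
        ih hC x' ⟨hx', fun hh => hxx (Set.mem_singleton_iff.mp hh).symm⟩ hd1
      refine ⟨D, Dismantles.step x ⟨hx, hxx⟩ hd2 ?_, hCD⟩
      have hcomm : (S \ {x'}) \ {x} = (S \ {x}) \ {x'} := by
        ext z; simp only [Set.mem_diff, Set.mem_singleton_iff]; tauto
      rwa [hcomm]

theorem main {S C' : Set V} (h2 : Dismantles E S C') :
    ∀ D : Set V, Dismantles E S D → Stiff E D → Stiff E C' → DIso E D C' := by
  induction h2 with
  | refl S =>
    intro D hD hsD hsS
    rw [stiff_dismantles_eq hD hsS]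
    exact DIso.refl S
  | step x hx hdom h ih =>
    intro D hD hsD hsC'
    obtain ⟨D'', hD'', hDD''⟩ := key hD hsD x hx hdom
    exact hDD''.trans (ih D'' hD'' (stiff_of_diso hDD'' hsD) hsC')

end Stmt3Aux

/-- If a digraph dismantles to two induced subgraphs `C` and `C'`, neither of which has a
dominated vertex, then `C` and `C'` are isomorphic (as induced subgraphs). -/
theorem stmt3 {V : Type*} (E : V → V → Prop) (C C' : Set V)
    (h1 : Dismantles E Set.univ C) (h2 : Dismantles E Set.univ C')
    (hC : ∀ x ∈ C, ¬ ∃ y ∈ C, Dominates E C y x)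
    (hC' : ∀ x ∈ C', ¬ ∃ y ∈ C', Dominates E C' y x) :
    ∃ f : V → V, Set.BijOn f C C' ∧
      ∀ u ∈ C, ∀ v ∈ C, (E u v ↔ E (f u) (f v)) := by
  exact Stmt3Aux.main h2 C h1 hC hC'
end

section
/- A finite digraph A dismantles to an induced subgraph B if and only if there exist n ≥ 0 and a sequence of homomorphisms φ_0, φ_1, …, φ_n : A → A such that φ_0 = id, each φ_t fixes B pointwise, φ_n is a retraction onto B, and consecutive φ_{t-1}, φ_t are adjacent in A^A (meaning: for every edge (a,a') of A, both (φ_{t-1}(a), φ_t(a')) and (φ_t(a), φ_{t-1}(a')) and (φ_{t-1}(a),φ_{t-1}(a')) and (φ_t(a),φ_t(a')) are edges of A). -/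
/-- `f` and `g` are adjacent in the exponential digraph `A^A`. -/
def Adjacent {α : Type*} (E : α → α → Prop) (f g : α → α) : Prop :=
  ∀ a a', E a a' →
    E (f a) (g a') ∧ E (g a) (f a') ∧ E (f a) (f a') ∧ E (g a) (g a')

section AuxChain

variable {V : Type*}

lemma dismantles_subset (E : V → V → Prop) {S T : Set V} (h : Dismantles E S T) : T ⊆ S := by
  induction h with
  | refl S => exact subset_rfl
  | step x hx hdom h ih => exact ih.trans Set.diff_subset

/-- Auxiliary chain predicate relative to a set `S`. -/
def GoodChain (E : V → V → Prop) (S B : Set V) (n : ℕ) (φ : Fin (n + 1) → V → V) : Prop :=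
  (∀ t, ∀ a ∈ S, φ t a ∈ S) ∧
  (∀ t, ∀ a ∈ S, ∀ a' ∈ S, E a a' → E (φ t a) (φ t a')) ∧
  (∀ a ∈ S, φ 0 a = a) ∧
  (∀ t, ∀ b ∈ B, φ t b = b) ∧
  (∀ a ∈ S, φ (Fin.last n) a ∈ B) ∧
  (∀ t : Fin n, ∀ a ∈ S, ∀ a' ∈ S, E a a' →
    E (φ t.castSucc a) (φ t.succ a') ∧ E (φ t.succ a) (φ t.castSucc a') ∧
    E (φ t.castSucc a) (φ t.castSucc a') ∧ E (φ t.succ a) (φ t.succ a'))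

lemma GoodChain.drop {E : V → V → Prop} {S B : Set V} {n : ℕ} {φ : Fin (n + 2) → V → V}
    (h : GoodChain E S B (n + 1) φ) (hid : ∀ a ∈ S, φ 1 a = a) :
    GoodChain E S B n (fun t => φ t.succ) := by
  obtain ⟨hmap, hhom, hzero, hB, hlast, hadj⟩ := h
  refine ⟨fun t => hmap _, fun t => hhom _, ?_, fun t => hB _, ?_, ?_⟩
  · intro a ha
    simpa [Fin.succ_zero_eq_one] using hid a ha
  · intro a ha
    simpa [Fin.succ_last] using hlast a ha
  · intro t a ha a' ha' he
    have := hadj t.succ a ha a' ha' he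
    simpa [← Fin.succ_castSucc] using this

/-- Forward direction: dismantling gives a good chain. -/
lemma dismantles_gc (E : V → V → Prop) {S B : Set V} (h : Dismantles E S B) :
    ∃ (n : ℕ) (φ : Fin (n + 1) → V → V), GoodChain E S B n φ := by
  classical
  induction h with
  | refl S =>
    exact ⟨0, fun _ => id, fun t a ha => ha, fun t a ha a' ha' he => he,
      fun a ha => rfl, fun t b hb => rfl, fun a ha => ha, fun t => t.elim0⟩
  | @step S B x hx hdom hrest ih =>
    obtain ⟨y, hyS, hyx, hloop, hdom2⟩ := hdom
    obtain ⟨n, φ, hmap, hhom, hzero, hB, hlast, hadj⟩ := ih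
    have hBsub : B ⊆ S \ {x} := dismantles_subset E hrest
    have hxB : x ∉ B := fun hb => (hBsub hb).2 rfl
    set r : V → V := fun v => if v = x then y else v with hr
    have hrS : ∀ a ∈ S, r a ∈ S \ {x} := by
      intro a ha
      by_cases hax : a = x
      · simp only [hr, hax, if_pos rfl]
        exact ⟨hyS, hyx⟩
      · simp only [hr, if_neg hax]
        exact ⟨ha, hax⟩
    have hrid : ∀ a, a ≠ x → r a = a := by
      intro a ha; simp [hr, ha]
    have hrhom : ∀ u ∈ S, ∀ v ∈ S, E u v → E (r u) (r v) := by
      intro u hu v hv he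
      by_cases hux : u = x <;> by_cases hvx : v = x
      · subst hux; subst hvx; simpa [hr] using hloop he
      · subst hux; rw [hrid v hvx]; simpa [hr] using (hdom2 v hv).1 he
      · subst hvx; rw [hrid u hux]; simpa [hr] using (hdom2 u hu).2 he
      · rw [hrid u hux, hrid v hvx]; exact he
    refine ⟨n + 1, Fin.cons id (fun t => φ t ∘ r), ?_, ?_, ?_, ?_, ?_, ?_⟩
    · intro t
      induction t using Fin.cases with
      | zero => intro a ha; simpa using ha
      | succ u =>
        intro a ha
        simp only [Fin.cons_succ, Function.comp_apply]
        exact (hmap u _ (hrS a ha)).1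
    · intro t
      induction t using Fin.cases with
      | zero => intro a ha a' ha' he; simpa using he
      | succ u =>
        intro a ha a' ha' he
        simp only [Fin.cons_succ, Function.comp_apply]
        exact hhom u _ (hrS a ha) _ (hrS a' ha') (hrhom a ha a' ha' he)
    · intro a ha; simp
    · intro t
      induction t using Fin.cases with
      | zero => intro b hb; simp
      | succ u =>
        intro b hb
        simp only [Fin.cons_succ, Function.comp_apply]
        rw [hrid b (fun hbx => hxB (hbx ▸ hb))]
        exact hB u b hb
    · intro a ha
      rw [show (Fin.last (n + 1)) = (Fin.last n).succ from rfl]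
      simp only [Fin.cons_succ, Function.comp_apply]
      exact hlast _ (hrS a ha)
    · intro s
      induction s using Fin.cases with
      | zero =>
        intro a ha a' ha' he
        simp only [Fin.castSucc_zero, Fin.cons_zero, Fin.cons_succ, Function.comp_apply,
          id_eq]
        rw [hzero _ (hrS a ha), hzero _ (hrS a' ha')]
        refine ⟨?_, ?_, he, hrhom a ha a' ha' he⟩
        · by_cases hax : a' = x
          · subst hax; simpa [hr] using (hdom2 a ha).2 he
          · rw [hrid a' hax]; exact he
        · by_cases hax : a = x
          · subst hax; simpa [hr] using (hdom2 a' ha').1 he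
          · rw [hrid a hax]; exact he
      | succ u =>
        intro a ha a' ha' he
        rw [← Fin.succ_castSucc]
        simp only [Fin.cons_succ, Function.comp_apply]
        exact hadj u _ (hrS a ha) _ (hrS a' ha') (hrhom a ha a' ha' he)

/-- Converse direction: a good chain gives dismantling. -/
lemma gc_dismantles [Fintype V] (E : V → V → Prop) :
    ∀ n (S B : Set V) (φ : Fin (n + 1) → V → V), B ⊆ S → GoodChain E S B n φ →
      Dismantles E S B := by
  classical
  intro n
  induction n with
  | zero =>
    intro S B φ hBS h
    have hSB : S ⊆ B := by
      intro a ha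
      have h1 := h.2.2.2.2.1 a ha
      rwa [show (Fin.last 0) = 0 from rfl, h.2.2.1 a ha] at h1
    rw [le_antisymm hSB hBS]
    exact Dismantles.refl B
  | succ n ih =>
    have aux : ∀ m (S B : Set V) (φ : Fin (n + 2) → V → V),
        {a ∈ S | φ 1 a ≠ a}.ncard ≤ m → B ⊆ S → GoodChain E S B (n + 1) φ →
        Dismantles E S B := by
      intro m
      induction m with
      | zero =>
        intro S B φ hm hBS h
        have hempty : {a ∈ S | φ 1 a ≠ a} = ∅ :=
          (Set.ncard_eq_zero (Set.toFinite _)).mp (Nat.le_zero.mp hm)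
        have hid : ∀ a ∈ S, φ 1 a = a := by
          intro a ha
          by_contra hne
          exact (Set.eq_empty_iff_forall_notMem.mp hempty a) ⟨ha, hne⟩
        exact ih S B _ hBS (h.drop hid)
      | succ m ihm =>
        intro S B φ hm hBS h
        by_cases hne : ({a ∈ S | φ 1 a ≠ a}).Nonempty
        · obtain ⟨x, hxS, hx1⟩ := hne
          obtain ⟨hmap, hhom, hzero, hB, hlast, hadj⟩ := h
          set y := φ 1 x with hy
          have hyS : y ∈ S := hmap 1 x hxS
          have hxB : x ∉ B := fun hb => hx1 (hB 1 x hb)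
          have hadj0 : ∀ a ∈ S, ∀ a' ∈ S, E a a' →
              E a (φ 1 a') ∧ E (φ 1 a) a' ∧ E a a' ∧ E (φ 1 a) (φ 1 a') := by
            intro a ha a' ha' he
            have h4 := hadj 0 a ha a' ha' he
            rwa [Fin.castSucc_zero, Fin.succ_zero_eq_one, hzero a ha, hzero a' ha'] at h4
          have hdom : Dominates E S y x :=
            ⟨hx1, fun hxx => (hadj0 x hxS x hxS hxx).2.2.2,
              fun z hz => ⟨fun hxz => (hadj0 x hxS z hz hxz).2.1,
                fun hzx => (hadj0 z hz x hxS hzx).1⟩⟩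
          obtain ⟨hyx, hloop, hdom2⟩ := hdom
          set r : V → V := fun v => if v = x then y else v with hr
          have hrS : ∀ a ∈ S, r a ∈ S \ {x} := by
            intro a ha
            by_cases hax : a = x
            · simp only [hr, hax, if_pos rfl]; exact ⟨hyS, hyx⟩
            · simp only [hr, if_neg hax]; exact ⟨ha, hax⟩
          have hrid : ∀ a, a ≠ x → r a = a := by
            intro a ha; simp [hr, ha]
          have hrhom : ∀ u ∈ S, ∀ v ∈ S, E u v → E (r u) (r v) := by
            intro u hu v hv he
            by_cases hux : u = x <;> by_cases hvx : v = x
            · subst hux; subst hvx; simpa [hr] using hloop he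
            · subst hux; rw [hrid v hvx]; simpa [hr] using (hdom2 v hv).1 he
            · subst hvx; rw [hrid u hux]; simpa [hr] using (hdom2 u hu).2 he
            · rw [hrid u hux, hrid v hvx]; exact he
          set ψ : Fin (n + 2) → V → V := fun t v => r (φ t v) with hψ
          have hSsub : ∀ a ∈ S \ {x}, a ∈ S := fun a ha => ha.1
          have hBsub : B ⊆ S \ {x} := fun b hb => ⟨hBS hb, fun hbx => hxB (hbx ▸ hb)⟩
          have hchain : GoodChain E (S \ {x}) B (n + 1) ψ := by
            refine ⟨?_, ?_, ?_, ?_, ?_, ?_⟩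
            · intro t a ha; exact hrS _ (hmap t a ha.1)
            · intro t a ha a' ha' he
              exact hrhom _ (hmap t a ha.1) _ (hmap t a' ha'.1) (hhom t a ha.1 a' ha'.1 he)
            · intro a ha
              simp only [hψ, hzero a ha.1]
              exact hrid a ha.2
            · intro t b hb
              simp only [hψ, hB t b hb]
              exact hrid b (fun hbx => hxB (hbx ▸ hb))
            · intro a ha
              simp only [hψ]
              rw [hrid _ (fun hbx => hxB (hbx ▸ hlast a ha.1))]
              exact hlast a ha.1
            · intro t a ha a' ha' he
              obtain ⟨e1, e2, e3, e4⟩ := hadj t a ha.1 a' ha'.1 he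
              exact ⟨hrhom _ (hmap _ a ha.1) _ (hmap _ a' ha'.1) e1,
                hrhom _ (hmap _ a ha.1) _ (hmap _ a' ha'.1) e2,
                hrhom _ (hmap _ a ha.1) _ (hmap _ a' ha'.1) e3,
                hrhom _ (hmap _ a ha.1) _ (hmap _ a' ha'.1) e4⟩
          have hcard : {a ∈ S \ {x} | ψ 1 a ≠ a}.ncard ≤ m := by
            have hsub : {a ∈ S \ {x} | ψ 1 a ≠ a} ⊆ {a ∈ S | φ 1 a ≠ a} \ {x} := by
              rintro a ⟨⟨haS, hax⟩, hmoved⟩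
              refine ⟨⟨haS, ?_⟩, hax⟩
              intro heq
              apply hmoved
              simp only [hψ, heq]
              exact hrid a hax
            have h1 : ({a ∈ S | φ 1 a ≠ a} \ {x}).ncard < {a ∈ S | φ 1 a ≠ a}.ncard :=
              Set.ncard_diff_singleton_lt_of_mem ⟨hxS, hx1⟩ (Set.toFinite _)
            have h2 := Set.ncard_le_ncard hsub (Set.toFinite _)
            omega
          exact Dismantles.step x hxS ⟨y, hyS, hyx, hloop, hdom2⟩
            (ihm (S \ {x}) B ψ hcard hBsub hchain)
        · apply ihm S B φ ?_ hBS h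
          simp [Set.not_nonempty_iff_eq_empty.mp hne]
    intro S B φ hBS h
    exact aux _ S B φ le_rfl hBS h

end AuxChain

/-- A finite digraph `A` dismantles to an induced subgraph `B` iff there is a link of
homomorphisms from the identity to a retraction onto `B`, all fixing `B` pointwise,
with consecutive maps adjacent in `A^A`. -/
theorem stmt7 {V : Type*} [Fintype V] (E : V → V → Prop) (B : Set V) :
    Dismantles E Set.univ B ↔
      ∃ (n : ℕ) (φ : Fin (n + 1) → V → V),
        (∀ t, Hom E E (φ t)) ∧
        φ 0 = id ∧
        (∀ t, ∀ b ∈ B, φ t b = b) ∧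
        (∀ v, φ (Fin.last n) v ∈ B) ∧
        ∀ t : Fin n, Adjacent E (φ t.castSucc) (φ t.succ) := by
  constructor
  · intro h
    obtain ⟨n, φ, hmap, hhom, hzero, hB, hlast, hadj⟩ := dismantles_gc E h
    refine ⟨n, φ, ?_, ?_, hB, ?_, ?_⟩
    · intro t u v he; exact hhom t u trivial v trivial he
    · funext a; exact hzero a trivial
    · intro v; exact hlast v trivial
    · intro t a a' he; exact hadj t a trivial a' trivial he
  · rintro ⟨n, φ, hhom, hzero, hB, hlast, hadj⟩
    refine gc_dismantles E n Set.univ B φ (Set.subset_univ B)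
      ⟨fun t a _ => trivial, fun t a _ a' _ he => hhom t a a' he,
        fun a _ => by rw [hzero]; rfl, hB, fun a _ => hlast a,
        fun t a _ a' _ he => hadj t a a' he⟩
end

section
/- Let H be a digraph whose square H² dismantles to its diagonal Δ = {(u,u) : u ∈ V(H)}. Then there exists a sequence of homomorphisms P_0, …, P_n : H² → H with P_0 = π_1 (first projection), P_n = π_2 (second projection), and consecutive P_{t-1}, P_t adjacent in the exponential digraph H^{H²}. -/
/-- The categorical square of a digraph: componentwise arcs. -/
def SqRel {α : Type*} (E : α → α → Prop) : α × α → α × α → Prop :=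
  fun p q => E p.1 q.1 ∧ E p.2 q.2

/-! Folding a dominated vertex onto its dominator is a retraction adjacent to the identity in the
exponential digraph, and precomposition with it preserves adjacency. Composing the foldings of
the dismantling joins the identity of `H²` to a retraction `r` onto the diagonal, so
postcomposing with the two projections joins `π₁` and `π₂` to the same map `π₁ ∘ r = π₂ ∘ r`. -/

theorem Relation.ReflTransGen.exists_fin_path {α : Type*} {R : α → α → Prop} {a b : α}
    (h : Relation.ReflTransGen R a b) :
    ∃ (n : ℕ) (P : Fin (n + 1) → α),
      P 0 = a ∧ P (Fin.last n) = b ∧ ∀ t : Fin n, R (P t.castSucc) (P t.succ) := by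
  induction h using Relation.ReflTransGen.head_induction_on with
  | refl => exact ⟨0, fun _ => b, rfl, rfl, Fin.elim0⟩
  | head hac _ ih =>
    obtain ⟨n, P, h0, hlast, hP⟩ := ih
    refine ⟨n + 1, Fin.cons _ P, rfl, by rw [← Fin.succ_last, Fin.cons_succ, hlast], ?_⟩
    intro t
    cases t using Fin.cases with
    | zero => simpa [h0] using hac
    | succ s => simpa [← Fin.succ_castSucc] using hP s

section Exponential

open Set

variable {α β γ : Type*} (E : α → α → Prop) (F : β → β → Prop)

def HomOn (S : Set α) (f : α → β) : Prop :=
  ∀ a ∈ S, ∀ b ∈ S, E a b → F (f a) (f b)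

/-- Adjacency of `f` and `g` in the exponential digraph `F ^ E`, restricted to `S`. -/
def ExpAdjOn (S : Set α) (f g : α → β) : Prop :=
  HomOn E F S f ∧ HomOn E F S g ∧ ∀ a ∈ S, ∀ b ∈ S, E a b → F (f a) (g b) ∧ F (g a) (f b)

variable {E F}

theorem homOn_univ_iff {f : α → β} : HomOn E F univ f ↔ Hom E F f := by
  simp [HomOn, Hom]

theorem homOn_id (S : Set α) : HomOn E E S id :=
  fun _ _ _ _ hab => hab

theorem ExpAdjOn.symm {S : Set α} {f g : α → β} (h : ExpAdjOn E F S f g) :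
    ExpAdjOn E F S g f :=
  ⟨h.2.1, h.1, fun a ha b hb hab => (h.2.2 a ha b hb hab).symm⟩

instance (S : Set α) : Std.Symm (ExpAdjOn E F S) :=
  ⟨fun _ _ h => h.symm⟩

theorem ExpAdjOn.comp_left {G : γ → γ → Prop} {S : Set α} {f g : α → β} {φ : β → γ}
    (hφ : Hom F G φ) (h : ExpAdjOn E F S f g) : ExpAdjOn E G S (φ ∘ f) (φ ∘ g) :=
  ⟨fun a ha b hb hab => hφ _ _ (h.1 a ha b hb hab),
    fun a ha b hb hab => hφ _ _ (h.2.1 a ha b hb hab),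
    fun a ha b hb hab => ⟨hφ _ _ (h.2.2 a ha b hb hab).1, hφ _ _ (h.2.2 a ha b hb hab).2⟩⟩

theorem ExpAdjOn.comp_right {D : γ → γ → Prop} {S : Set γ} {S' : Set α} {f g : α → β}
    {r : γ → α} (hmaps : MapsTo r S S') (hr : HomOn D E S r) (h : ExpAdjOn E F S' f g) :
    ExpAdjOn D F S (f ∘ r) (g ∘ r) :=
  ⟨fun a ha b hb hab => h.1 _ (hmaps ha) _ (hmaps hb) (hr a ha b hb hab),
    fun a ha b hb hab => h.2.1 _ (hmaps ha) _ (hmaps hb) (hr a ha b hb hab),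
    fun a ha b hb hab => h.2.2 _ (hmaps ha) _ (hmaps hb) (hr a ha b hb hab)⟩

end Exponential

section Dismantling

open Relation Set

variable {α : Type*} {E : α → α → Prop} {S : Set α}

/-- Folding a dominated vertex `x` onto its dominator `y`. -/
theorem Dominates.exists_retraction {x y : α} (hy : y ∈ S) (hdom : Dominates E S y x) :
    ∃ ρ : α → α, MapsTo ρ S (S \ {x}) ∧ ExpAdjOn E E S id ρ := by
  classical
  obtain ⟨hne, hloop, hnbr⟩ := hdom
  refine ⟨fun a => if a = x then y else a, fun a ha => ?_, homOn_id S, ?_, ?_⟩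
  · by_cases hax : a = x <;> simp [hax, hy, hne, ha]
  · intro a ha b hb hab
    by_cases hax : a = x <;> by_cases hbx : b = x
    · subst hax hbx; simpa using hloop hab
    · subst hax; simpa [hbx] using (hnbr b hb).1 hab
    · subst hbx; simpa [hax] using (hnbr a ha).2 hab
    · simpa [hax, hbx] using hab
  · intro a ha b hb hab
    constructor
    · by_cases hbx : b = x
      · subst hbx; simpa using (hnbr a ha).2 hab
      · simpa [hbx] using hab
    · by_cases hax : a = x
      · subst hax; simpa using (hnbr b hb).1 hab
      · simpa [hax] using hab

/-- `r` is the composite of the successive foldings. -/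
theorem Dismantles.exists_reflTransGen_id {T : Set α} (h : Dismantles E S T) :
    ∃ r : α → α, MapsTo r S T ∧ ReflTransGen (ExpAdjOn E E S) id r := by
  induction h with
  | refl S => exact ⟨id, mapsTo_id S, .refl⟩
  | step x _ hdom _ ih =>
    obtain ⟨y, hy, hxy⟩ := hdom
    obtain ⟨ρ, hρmaps, hρ⟩ := hxy.exists_retraction hy
    obtain ⟨r, hrmaps, hr⟩ := ih
    refine ⟨r ∘ ρ, hrmaps.comp hρmaps, .head hρ ?_⟩
    exact hr.lift (· ∘ ρ) fun f g hfg => hfg.comp_right hρmaps hρ.2.1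

end Dismantling

theorem stmt8_general {V : Type*} (E : V → V → Prop)
    (h : Dismantles (SqRel E) Set.univ {p : V × V | p.1 = p.2}) :
    ∃ (n : ℕ) (P : Fin (n + 1) → V × V → V),
      (∀ t, Hom (SqRel E) E (P t)) ∧
      P 0 = Prod.fst ∧
      P (Fin.last n) = Prod.snd ∧
      ∀ t : Fin n, ∀ x y, SqRel E x y →
        E (P t.castSucc x) (P t.succ y) ∧ E (P t.succ x) (P t.castSucc y) := by
  obtain ⟨r, hr_diag, hr⟩ := h.exists_reflTransGen_id
  have hfst : Hom (SqRel E) E Prod.fst := fun _ _ h => h.1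
  have hsnd : Hom (SqRel E) E Prod.snd := fun _ _ h => h.2
  have hproj_eq : Prod.fst ∘ r = Prod.snd ∘ r := funext fun p => hr_diag (Set.mem_univ p)
  have hto : Relation.ReflTransGen (ExpAdjOn (SqRel E) E .univ) Prod.fst (Prod.snd ∘ r) :=
    hproj_eq ▸ hr.lift (Prod.fst ∘ ·) fun f g hfg => hfg.comp_left hfst
  have hfrom : Relation.ReflTransGen (ExpAdjOn (SqRel E) E .univ) (Prod.snd ∘ r) Prod.snd :=
    Std.Symm.symm _ _ (hr.lift (Prod.snd ∘ ·) fun f g hfg => hfg.comp_left hsnd)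
  obtain ⟨n, P, h0, hlast, hP⟩ := (hto.trans hfrom).exists_fin_path
  refine ⟨n, P, fun t => ?_, h0, hlast, fun t x y hxy => (hP t).2.2 x trivial y trivial hxy⟩
  cases t using Fin.cases with
  | zero => rw [h0]; exact hfst
  | succ s => exact homOn_univ_iff.1 (hP s).2.1

/-- If `H²` dismantles to its diagonal, then there is a link of homomorphisms `H² → H`
from the first projection to the second projection, with consecutive maps adjacent in
the exponential digraph `H^(H²)`. -/
theorem stmt8 {V : Type*} [Fintype V] (E : V → V → Prop)
    (h : Dismantles (SqRel E) Set.univ {p : V × V | p.1 = p.2}) :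
    ∃ (n : ℕ) (P : Fin (n + 1) → V × V → V),
      (∀ t, Hom (SqRel E) E (P t)) ∧
      P 0 = Prod.fst ∧
      P (Fin.last n) = Prod.snd ∧
      ∀ t : Fin n, ∀ x y, SqRel E x y →
        E (P t.castSucc x) (P t.succ y) ∧ E (P t.succ x) (P t.castSucc y) :=
  stmt8_general E h
end

section
/- Let A be a finite digraph that is a core (every endomorphism of A is an automorphism) with tree duality, i.e., every digraph admitting no homomorphism to A contains a homomorphic image of an oriented tree admitting no homomorphism to A. Then A is rigid: the identity is the only endomorphism of A. -/
/-- A digraph is an oriented tree when its underlying undirected graph is a tree. -/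
def IsOrientedTree {T : Type} (G : T → T → Prop) : Prop :=
  (SimpleGraph.fromRel G).IsTree

/-- `(A, E)` has tree duality: every digraph with no homomorphism to `A` admits a
homomorphism from an oriented tree which itself has no homomorphism to `A`. -/
def TreeDuality (A : Type) (E : A → A → Prop) : Prop :=
  ∀ (B : Type) (F : B → B → Prop), (¬ ∃ f : B → A, Hom F E f) →
    ∃ (T : Type) (G : T → T → Prop), IsOrientedTree G ∧
      (∃ g : T → B, Hom G F g) ∧ ¬ ∃ h : T → A, Hom G E h

open Function

variable {α β γ : Type*}

theorem Hom.comp {E : α → α → Prop} {F : β → β → Prop} {H : γ → γ → Prop} {f : α → β}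
    {g : β → γ} (hg : Hom F H g) (hf : Hom E F f) : Hom E H (g ∘ f) :=
  fun u v huv => hg _ _ (hf u v huv)

theorem Hom.iterate {E : α → α → Prop} {f : α → α} (hf : Hom E E f) (n : ℕ) : Hom E E f^[n] := by
  induction n with
  | zero => exact fun u v huv => huv
  | succ n ih =>
    intro u v huv
    rw [iterate_succ_apply', iterate_succ_apply']
    exact hf _ _ (ih u v huv)

def PowerAdj (E : α → α → Prop) (X Y : Set α) : Prop :=
  (∀ x ∈ X, ∃ y ∈ Y, E x y) ∧ (∀ y ∈ Y, ∃ x ∈ X, E x y)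

theorem PowerAdj.union_self {E : α → α → Prop} {X Y : Set α} (hXY : PowerAdj E X Y)
    (hYX : PowerAdj E Y X) : PowerAdj E (X ∪ Y) (X ∪ Y) := by
  constructor
  · rintro x (hx | hx)
    · obtain ⟨y, hy, hxy⟩ := hXY.1 x hx
      exact ⟨y, .inr hy, hxy⟩
    · obtain ⟨y, hy, hxy⟩ := hYX.1 x hx
      exact ⟨y, .inl hy, hxy⟩
  · rintro y (hy | hy)
    · obtain ⟨x, hx, hxy⟩ := hYX.2 y hy
      exact ⟨x, .inr hx, hxy⟩
    · obtain ⟨x, hx, hxy⟩ := hXY.2 y hy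
      exact ⟨x, .inl hx, hxy⟩

theorem SimpleGraph.IsAcyclic.eq_concat_or_eq_concat {V : Type*} {G : SimpleGraph V}
    (hG : G.IsAcyclic) {u v w : V} {p : G.Walk u v} {q : G.Walk u w} (hp : p.IsPath)
    (hq : q.IsPath) (hadj : G.Adj v w) : q = p.concat hadj ∨ p = q.concat hadj.symm := by
  by_cases hv : v ∈ q.support
  · exact .inl (hG.path_concat hp hq hadj hv)
  · exact .inr (hG.path_concat hq hp hadj.symm
      (hG.mem_support_of_ne_mem_support_of_adj_of_isPath hp hq hadj hv))

/-- Values are propagated from a root along the unique paths of the tree. -/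
theorem SimpleGraph.IsTree.exists_forall_adj {V : Type*} {G : SimpleGraph V} (hG : G.IsTree)
    {P : V → α → Prop} {R : V → V → α → α → Prop} (hR : ∀ u v x y, R u v x y → R v u y x)
    (hP : ∃ v x, P v x) (hext : ∀ u v, G.Adj u v → ∀ x, P u x → ∃ y, P v y ∧ R u v x y) :
    ∃ h : V → α, ∀ u v, G.Adj u v → R u v (h u) (h v) := by
  classical
  obtain ⟨r, x₀, hx₀⟩ := hP
  have : Nonempty α := ⟨x₀⟩
  let step (u v : V) (x : α) : α := Classical.epsilon fun y => P v y ∧ R u v x y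
  have hstep : ∀ u v, G.Adj u v → ∀ x, P u x → P v (step u v x) ∧ R u v x (step u v x) :=
    fun u v huv x hx => Classical.epsilon_spec (hext u v huv x hx)
  let transport {u v : V} (p : G.Walk u v) (x : α) : α :=
    p.darts.foldl (fun y d => step d.fst d.snd y) x
  have transport_spec : ∀ {u v} (p : G.Walk u v) x, P u x → P v (transport p x) := by
    intro u v p
    induction p with
    | nil => exact fun x hx => hx
    | cons huv p ih => exact fun x hx => ih _ (hstep _ _ huv x hx).1
  have transport_concat : ∀ {u v w} (p : G.Walk u v) (h : G.Adj v w) x,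
      transport (p.concat h) x = step v w (transport p x) := by
    intro u v w p h x
    simp [transport]
  choose path hpath _ using hG.existsUnique_path r
  refine ⟨fun t => transport (path t) x₀, fun u v huv => ?_⟩
  rcases hG.isAcyclic.eq_concat_or_eq_concat (hpath u) (hpath v) huv with h | h
  · simp only [h, transport_concat]
    exact (hstep u v huv _ (transport_spec _ _ hx₀)).2
  · simp only [h, transport_concat]
    exact hR _ _ _ _ (hstep v u huv.symm _ (transport_spec _ _ hx₀)).2

theorem IsOrientedTree.exists_hom {T : Type} {G : T → T → Prop} (hT : IsOrientedTree G)
    (hasymm : ∀ t t', G t t' → ¬ G t' t) {E : α → α → Prop} {σ : T → Set α}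
    (hne : ∀ t, (σ t).Nonempty) (hσ : Hom G (PowerAdj E) σ) : ∃ h : T → α, Hom G E h := by
  have hP : ∃ t x, x ∈ σ t := by
    obtain ⟨t⟩ := hT.connected.nonempty
    exact ⟨t, hne t⟩
  have hext : ∀ u v, (SimpleGraph.fromRel G).Adj u v → ∀ x ∈ σ u,
      ∃ y ∈ σ v, (G u v → E x y) ∧ (G v u → E y x) := by
    intro u v huv x hx
    rcases ((SimpleGraph.fromRel_adj G u v).1 huv).2 with huv | hvu
    · obtain ⟨y, hy, hxy⟩ := (hσ u v huv).1 x hx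
      exact ⟨y, hy, fun _ => hxy, fun hvu => absurd hvu (hasymm u v huv)⟩
    · obtain ⟨y, hy, hyx⟩ := (hσ v u hvu).2 x hx
      exact ⟨y, hy, fun huv => absurd hvu (hasymm u v huv), fun _ => hyx⟩
  obtain ⟨h, hh⟩ := SimpleGraph.IsTree.exists_forall_adj hT (P := fun t x => x ∈ σ t)
    (fun _ _ _ _ => And.symm) hP hext
  refine ⟨h, fun u v huv => (hh u v ?_).1 huv⟩
  have hne : u ≠ v := by
    rintro rfl
    exact hasymm u u huv huv
  exact (SimpleGraph.fromRel_adj G u v).2 ⟨hne, .inl huv⟩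

section CoreDigraph

variable {A : Type} {E : A → A → Prop}

theorem subsingleton_of_loop (hcore : ∀ f : A → A, Hom E E f → Bijective f) {a : A}
    (ha : E a a) : Subsingleton A :=
  ⟨fun _ _ => (hcore (fun _ => a) fun _ _ _ => ha).1 rfl⟩

theorem not_exists_hom_fin_lt_of_card_lt [Fintype A] (hloop : ∀ a, ¬ E a a) {n : ℕ}
    (hn : Fintype.card A < n) : ¬ ∃ g : Fin n → A, Hom (· < ·) E g := by
  rintro ⟨g, hg⟩
  have hinj : Injective g := by
    intro i j hij
    by_contra hne
    rcases Ne.lt_or_gt hne with hlt | hlt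
    · exact hloop (g j) (hij ▸ hg i j hlt)
    · exact hloop (g i) (hij ▸ hg j i hlt)
  simpa using (Fintype.card_le_of_injective g hinj).trans_lt hn

theorem not_powerAdj_self [Fintype A] (htree : TreeDuality A E) (hloop : ∀ a, ¬ E a a)
    {S : Set A} (hS : S.Nonempty) : ¬ PowerAdj E S S := by
  intro hSS
  obtain ⟨T, G, hT, ⟨g, hg⟩, hnot⟩ :=
    htree _ _ (not_exists_hom_fin_lt_of_card_lt hloop (Nat.lt_succ_self (Fintype.card A)))
  exact hnot (hT.exists_hom (fun t t' h h' => lt_asymm (hg t t' h) (hg t' t h'))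
    (fun _ => hS) fun _ _ _ => hSS)

theorem exists_hom_powerDigraph [Fintype A] (htree : TreeDuality A E) (hloop : ∀ a, ¬ E a a) :
    ∃ h : {X : Set A // X.Nonempty} → A, Hom (fun X Y => PowerAdj E X.1 Y.1) E h := by
  by_contra hno
  obtain ⟨T, G, hT, ⟨g, hg⟩, hnot⟩ := htree _ _ hno
  refine hnot (hT.exists_hom (σ := fun t => (g t).1) ?_ (fun t => (g t).2) hg)
  exact fun t t' h h' => not_powerAdj_self htree hloop ((g t).2.inl)
    ((hg t t' h).union_self (hg t' t h'))

theorem eq_id_of_hom_powerDigraph [Finite A] (hcore : ∀ f : A → A, Hom E E f → Bijective f)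
    {h : {X : Set A // X.Nonempty} → A} (hh : Hom (fun X Y => PowerAdj E X.1 Y.1) E h)
    {f : A → A} (hf : Hom E E f) : f = id := by
  have hper : ∀ a, a ∈ periodicPts f := (hcore f hf).1.mem_periodicPts
  let orbit (a : A) : {X : Set A // X.Nonempty} :=
    ⟨{b | b ∈ periodicOrbit f a}, a, self_mem_periodicOrbit (hper a)⟩
  have horbit : Hom E (fun X Y => PowerAdj E X.1 Y.1) orbit := by
    intro a b hab
    simp only [orbit, mem_periodicOrbit_iff (hper _)]
    constructor
    · rintro _ ⟨n, rfl⟩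
      exact ⟨_, ⟨n, rfl⟩, hf.iterate n a b hab⟩
    · rintro _ ⟨n, rfl⟩
      exact ⟨_, ⟨n, rfl⟩, hf.iterate n a b hab⟩
  have hinj : Injective (h ∘ orbit) := (hcore _ (hh.comp horbit)).1
  funext a
  exact hinj (by simp only [comp_apply, id_eq, orbit, periodicOrbit_apply_eq (hper a)])

end CoreDigraph

/-- A finite core digraph with tree duality is rigid: its only endomorphism is the
identity. -/
theorem stmt9 (A : Type) [Fintype A] (E : A → A → Prop)
    (hcore : ∀ f : A → A, Hom E E f → Function.Bijective f)
    (htree : TreeDuality A E) :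
    ∀ f : A → A, Hom E E f → f = id := by
  intro f hf
  by_cases hloop : ∃ a, E a a
  · obtain ⟨a, ha⟩ := hloop
    have := subsingleton_of_loop hcore ha
    exact Subsingleton.elim _ _
  · push Not at hloop
    exact eq_id_of_hom_powerDigraph hcore (exists_hom_powerDigraph htree hloop).choose_spec hf
end

section
/- Let A be a finite digraph and n ≥ 1. There exists a homomorphism from the one-tolerant power ¹Aⁿ⁺¹ to A if and only if every critical obstruction of A has at most n edges. -/
/-- One-tolerant `m`-th power of a digraph: two `m`-tuples are joined iff at most one
coordinate fails to carry an arc (i.e., arcs hold in at least `m - 1` coordinates). -/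
def TolRel {A : Type*} (E : A → A → Prop) (m : ℕ) :
    (Fin m → A) → (Fin m → A) → Prop :=
  fun a b => ∀ i j, ¬ E (a i) (b i) → ¬ E (a j) (b j) → i = j

/-- There is a homomorphism from `¹Aⁿ⁺¹` to `A` iff every critical obstruction of `A`
has at most `n` edges. -/
theorem stmt10 (A : Type) [Fintype A] (E : A → A → Prop) (n : ℕ) (hn : 1 ≤ n) :
    (∃ φ : (Fin (n + 1) → A) → A, Hom (TolRel E (n + 1)) E φ) ↔
      ∀ (C : Type) (_ : Fintype C) (F : C → C → Prop),
        (¬ ∃ f : C → A, Hom F E f) →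
        (∀ x : C, ∃ g : {c : C // c ≠ x} → A,
            Hom (fun u v : {c : C // c ≠ x} => F u.1 v.1) E g) →
        (∀ u v : C, F u v →
            ∃ g : C → A, Hom (fun a b : C => F a b ∧ (a, b) ≠ (u, v)) E g) →
        Set.ncard {p : C × C | F p.1 p.2} ≤ n := by
  classical
  constructor
  · -- forward direction
    rintro ⟨φ, hφ⟩ C instC F hobs _hvert hedge
    haveI := instC
    by_contra hcard
    push_neg at hcard
    have hcard' : n + 1 ≤ Set.ncard {p : C × C | F p.1 p.2} := hcard
    obtain ⟨t, hts, htcard⟩ := Set.exists_subset_card_eq hcard'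
    have htfin : t.Finite := Set.toFinite t
    haveI : Fintype t := htfin.fintype
    have hft : Fintype.card t = n + 1 := by
      rw [← Nat.card_eq_fintype_card, Nat.card_coe_set_eq, htcard]
    let e : Fin (n + 1) → t := (Fintype.equivFinOfCardEq hft).symm
    have he : Function.Injective e := (Fintype.equivFinOfCardEq hft).symm.injective
    have hF : ∀ k, F ((e k).1).1 ((e k).1).2 := fun k => hts (e k).2
    -- pick homomorphisms avoiding each chosen edge
    choose g hg using fun k => hedge ((e k).1).1 ((e k).1).2 (hF k)
    let f : C → (Fin (n + 1) → A) := fun c k => g k c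
    have hf : Hom F (TolRel E (n + 1)) f := by
      intro u v huv i j hi hj
      have key : ∀ k : Fin (n + 1), ¬ E (g k u) (g k v) → ((u, v) : C × C) = (e k).1 := by
        intro k hk
        by_contra hne
        exact hk (hg k u v ⟨huv, hne⟩)
      have h1 := key i hi
      have h2 := key j hj
      have : e i = e j := Subtype.ext (h1 ▸ h2 ▸ rfl)
      exact he this
    exact hobs ⟨φ ∘ f, fun u v huv => hφ _ _ (hf u v huv)⟩
  · -- reverse direction
    intro hcrit
    by_contra hnophi
    set V := Fin (n + 1) → A with hV
    -- predicate: there is a "sub-digraph" of the tolerant power with k vertices+edges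
    -- admitting no homomorphism to A
    let P : ℕ → Prop := fun k => ∃ (S : Finset V) (T : Finset (V × V)),
      (∀ p ∈ T, p.1 ∈ S ∧ p.2 ∈ S ∧ TolRel E (n + 1) p.1 p.2) ∧
      (¬ ∃ f : {x // x ∈ S} → A, Hom (fun u v : {x // x ∈ S} => (u.1, v.1) ∈ T) E f) ∧
      S.card + T.card = k
    have hP : ∃ k, P k := by
      refine ⟨_, Finset.univ, Finset.univ.filter (fun p => TolRel E (n + 1) p.1 p.2),
        ?_, ?_, rfl⟩
      · intro p hp
        exact ⟨Finset.mem_univ _, Finset.mem_univ _, (Finset.mem_filter.1 hp).2⟩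
      · rintro ⟨f, hf⟩
        apply hnophi
        refine ⟨fun x => f ⟨x, Finset.mem_univ x⟩, ?_⟩
        intro u v huv
        exact hf ⟨u, Finset.mem_univ u⟩ ⟨v, Finset.mem_univ v⟩
          (Finset.mem_filter.2 ⟨Finset.mem_univ _, huv⟩)
    obtain ⟨S, T, hT, hnohom, hk⟩ := Nat.find_spec hP
    have hmin : ∀ m < Nat.find hP, ¬ P m := fun m hm => Nat.find_min hP hm
    set C := {x // x ∈ S} with hC
    set F : C → C → Prop := fun u v => (u.1, v.1) ∈ T with hF
    -- vertex-criticality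
    have hvert : ∀ x : C, ∃ g : {c : C // c ≠ x} → A,
        Hom (fun u v : {c : C // c ≠ x} => F u.1 v.1) E g := by
      intro x
      set S' := S.erase x.1 with hS'
      set T' := T.filter (fun p => p.1 ≠ x.1 ∧ p.2 ≠ x.1) with hT'
      have hlt : S'.card + T'.card < Nat.find hP := by
        rw [← hk]
        have h1 : S'.card < S.card := Finset.card_erase_lt_of_mem x.2
        have h2 : T'.card ≤ T.card := Finset.card_filter_le _ _
        omega
      have := hmin _ hlt
      simp only [P, not_exists] at this
      have h3 := this S' T'
      have hcond1 : ∀ p ∈ T', p.1 ∈ S' ∧ p.2 ∈ S' ∧ TolRel E (n + 1) p.1 p.2 := by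
        intro p hp
        rw [hT', Finset.mem_filter] at hp
        obtain ⟨hpT, hp1, hp2⟩ := hp
        obtain ⟨hs1, hs2, htol⟩ := hT p hpT
        exact ⟨Finset.mem_erase.2 ⟨hp1, hs1⟩, Finset.mem_erase.2 ⟨hp2, hs2⟩, htol⟩
      have h4 : ∃ f : {y // y ∈ S'} → A,
          Hom (fun u v : {y // y ∈ S'} => (u.1, v.1) ∈ T') E f := by
        by_contra h5
        exact h3 ⟨hcond1, fun f hf => h5 ⟨f, hf⟩, rfl⟩
      obtain ⟨g', hg'⟩ := h4
      refine ⟨fun c => g' ⟨c.1.1, Finset.mem_erase.2 ⟨fun h => c.2 (Subtype.ext h), c.1.2⟩⟩, ?_⟩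
      intro u v huv
      apply hg'
      rw [hT', Finset.mem_filter]
      exact ⟨huv, fun h => u.2 (Subtype.ext h), fun h => v.2 (Subtype.ext h)⟩
    -- edge-criticality
    have hedge : ∀ u v : C, F u v →
        ∃ g : C → A, Hom (fun a b : C => F a b ∧ (a, b) ≠ (u, v)) E g := by
      intro u v huv
      set T' := T.erase (u.1, v.1) with hT'
      have hlt : S.card + T'.card < Nat.find hP := by
        rw [← hk]
        have h1 : T'.card < T.card := Finset.card_erase_lt_of_mem huv
        omega
      have := hmin _ hlt
      simp only [P, not_exists] at this
      have h3 := this S T'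
      have hcond1 : ∀ p ∈ T', p.1 ∈ S ∧ p.2 ∈ S ∧ TolRel E (n + 1) p.1 p.2 := by
        intro p hp
        exact hT p (Finset.mem_of_mem_erase hp)
      have h4 : ∃ f : {y // y ∈ S} → A,
          Hom (fun a b : {y // y ∈ S} => (a.1, b.1) ∈ T') E f := by
        by_contra h5
        exact h3 ⟨hcond1, fun f hf => h5 ⟨f, hf⟩, rfl⟩
      obtain ⟨g', hg'⟩ := h4
      refine ⟨g', ?_⟩
      rintro a b ⟨hab, hne⟩
      apply hg'
      rw [hT', Finset.mem_erase]
      refine ⟨?_, hab⟩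
      intro h
      apply hne
      have h1 : a.1 = u.1 := congrArg Prod.fst h
      have h2 : b.1 = v.1 := congrArg Prod.snd h
      rw [Prod.ext_iff]
      exact ⟨Subtype.ext h1, Subtype.ext h2⟩
    -- apply the criticality hypothesis
    have hEd : Set.ncard {p : C × C | F p.1 p.2} ≤ n :=
      hcrit C inferInstance F hnohom hvert hedge
    -- pigeonhole: find a good coordinate
    set Ed : Set (C × C) := {p : C × C | F p.1 p.2} with hEdDef
    set B : Set (Fin (n + 1)) := {i | ∃ p ∈ Ed, ¬ E ((p.1.1 : V) i) ((p.2.1 : V) i)} with hB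
    have hBcard : B.ncard ≤ n := by
      rcases isEmpty_or_nonempty C with hCE | hCN
      · have hBe : B = ∅ := by
          ext i
          simp only [hB, Set.mem_setOf_eq, Set.mem_empty_iff_false, iff_false]
          rintro ⟨p, _, _⟩
          exact hCE.elim p.1
        simp [hBe]
      · haveI : Nonempty (C × C) := ⟨(hCN.some, hCN.some)⟩
        have htot : ∀ i : Fin (n + 1), ∃ p : C × C,
            i ∈ B → p ∈ Ed ∧ ¬ E ((p.1.1 : V) i) ((p.2.1 : V) i) := by
          intro i
          by_cases h : i ∈ B
          · obtain ⟨p, hp1, hp2⟩ := h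
            exact ⟨p, fun _ => ⟨hp1, hp2⟩⟩
          · exact ⟨Classical.arbitrary _, fun h' => absurd h' h⟩
        choose q hq using htot
        have hinj : Set.InjOn q B := by
          intro i hi j hj heq
          obtain ⟨hEd1, hbad1⟩ := hq i hi
          obtain ⟨_, hbad2⟩ := hq j hj
          have htol := (hT ((((q i).1.1 : V)), ((q i).2.1 : V)) hEd1).2.2
          refine htol i j hbad1 ?_
          rw [heq]
          exact hbad2
        calc B.ncard ≤ Ed.ncard :=
              Set.ncard_le_ncard_of_injOn q (fun i hi => (hq i hi).1) hinj (Set.toFinite Ed)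
          _ ≤ n := hEd
    have hex : ∃ i : Fin (n + 1), i ∉ B := by
      by_contra h
      push_neg at h
      have : B = Set.univ := Set.eq_univ_of_forall h
      rw [this, Set.ncard_univ, Nat.card_eq_fintype_card, Fintype.card_fin] at hBcard
      omega
    obtain ⟨i, hi⟩ := hex
    apply hnohom
    refine ⟨fun c => c.1 i, ?_⟩
    intro u v huv
    by_contra hEi
    exact hi ⟨(u, v), huv, hEi⟩
end

section
/- Let A be a finite core digraph with finite duality. Then every homomorphism φ : ¹Aⁿ → A from a one-tolerant power of A to A is a near-unanimity operation: φ(y,x,…,x) = φ(x,y,x,…,x) = … = φ(x,…,x,y) = x for all x, y ∈ A. -/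
/-- `(A, E)` has finite duality: there is a finite family of digraphs such that an
arbitrary digraph has no homomorphism to `A` iff some member of the family admits a
homomorphism to it. -/
def FiniteDuality (A : Type) (E : A → A → Prop) : Prop :=
  ∃ (k : ℕ) (W : Fin k → Type) (F : ∀ i, W i → W i → Prop),
    ∀ (B : Type) (G : B → B → Prop),
      (¬ ∃ f : B → A, Hom G E f) ↔ ∃ i, ∃ g : W i → B, Hom (F i) G g

namespace Stmt11Aux

variable {A : Type}

/-- Alternating reachability predicate: `Qrel E r x z` means that `z` can "shadow" `x`
along any alternating out/in walk of length `r` starting at `x`. -/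
def Qrel (E : A → A → Prop) : ℕ → A → A → Prop
  | 0, _, _ => True
  | r+1, x, z =>
      (∀ x', E x x' → ∃ w, E z w ∧ Qrel E r x' w) ∧
      (∀ x'', E x'' x → ∃ w, E w z ∧ Qrel E r x'' w)

lemma Qrel_endo {E : A → A → Prop} {g : A → A} (hg : Hom E E g) :
    ∀ (r : ℕ) (x : A), Qrel E r x (g x)
  | 0, _ => trivial
  | r+1, x =>
      ⟨fun x' h => ⟨g x', hg _ _ h, Qrel_endo hg r x'⟩,
       fun x'' h => ⟨g x'', hg _ _ h, Qrel_endo hg r x''⟩⟩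

/-- Replacement lemma: in a loopless core, if `m` dominates `x` on both sides then `m = x`. -/
lemma repl {E : A → A → Prop}
    (hcore : ∀ f : A → A, Hom E E f → Function.Bijective f)
    (hnl : ∀ a, ¬ E a a) (x m : A)
    (hout : ∀ v, E x v → E m v) (hin : ∀ u, E u x → E u m) : m = x := by
  classical
  by_cases hmx : m = x
  · exact hmx
  · have hp : Hom E E (fun v => if v = x then m else v) := by
      intro a b hab
      by_cases ha : a = x <;> by_cases hb : b = x
      · exact absurd (by rwa [ha, hb] at hab) (hnl x)
      · simp only [if_pos ha, if_neg hb]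
        exact hout b (by rwa [ha] at hab)
      · simp only [if_neg ha, if_pos hb]
        exact hin a (by rwa [hb] at hab)
      · simpa only [if_neg ha, if_neg hb] using hab
    have hinj := (hcore _ hp).injective
    have heq : (fun v => if v = x then m else v) m = (fun v => if v = x then m else v) x := by
      simp [hmx]
    exact hinj heq

lemma iter_hom {E : A → A → Prop} {f : A → A} (hf : Hom E E f) :
    ∀ k, Hom E E f^[k]
  | 0 => fun u v h => by simpa using h
  | k+1 => fun u v h => by
      rw [Function.iterate_succ_apply', Function.iterate_succ_apply']
      exact hf _ _ (iter_hom hf k u v h)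

/-- Every endomorphism of a finite core has a homomorphic inverse. -/
lemma exists_inv [Fintype A] {E : A → A → Prop}
    (hcore : ∀ f : A → A, Hom E E f → Function.Bijective f)
    {f : A → A} (hf : Hom E E f) :
    ∃ g : A → A, Hom E E g ∧ (∀ a, g (f a) = a) ∧ (∀ a, f (g a) = a) := by
  classical
  have build : ∀ i j : ℕ, i < j → f^[i] = f^[j] →
      ∃ g : A → A, Hom E E g ∧ (∀ a, g (f a) = a) ∧ (∀ a, f (g a) = a) := by
    intro i j hij heq
    have hinj : Function.Injective f^[i] := (hcore f hf).injective.iterate i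
    have hid : ∀ a, f^[j-i] a = a := by
      intro a
      apply hinj
      have h1 : f^[i] (f^[j-i] a) = f^[i + (j-i)] a :=
        (Function.iterate_add_apply f i (j-i) a).symm
      rw [h1, Nat.add_sub_cancel' (le_of_lt hij), heq]
    have hd : 1 ≤ j - i := by omega
    refine ⟨f^[j-i-1], iter_hom hf _, ?_, ?_⟩
    · intro a
      have h2 : f^[j-i-1] (f a) = f^[j-i-1+1] a := (Function.iterate_succ_apply f _ a).symm
      rw [h2, Nat.sub_add_cancel hd]
      exact hid a
    · intro a
      have h2 : f (f^[j-i-1] a) = f^[j-i-1+1] a := (Function.iterate_succ_apply' f _ a).symm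
      rw [h2, Nat.sub_add_cancel hd]
      exact hid a
  obtain ⟨i, j, hne, heq⟩ :=
    Finite.exists_ne_map_eq_of_infinite (fun k : ℕ => f^[k])
  rcases hne.lt_or_gt with h | h
  · exact build i j h heq
  · exact build j i h heq.symm

/-- Master lemma: if `u` is constant `x` outside a set `β` of `t` free slots, and each
free value satisfies the alternating predicate `Qrel E (t-1) x ·`, then
`φ u = φ (const x)`. -/
lemma master {E : A → A → Prop} {n : ℕ} {φ : (Fin n → A) → A}
    (hφ : Hom (TolRel E n) E φ)
    {g : A → A} (hg : Hom E E g)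
    (hge : ∀ a, g (φ (fun _ => a)) = a)
    (heg : ∀ a, φ (fun _ => g a) = a)
    (hrepl : ∀ x m : A, (∀ v, E x v → E m v) → (∀ u, E u x → E u m) → m = x) :
    ∀ (t : ℕ) (x : A) (u : Fin n → A) (β : Finset (Fin n)),
      β.card = t → (∀ j, j ∉ β → u j = x) →
      (∀ j ∈ β, Qrel E (t-1) x (u j)) → φ u = φ (fun _ => x) := by
  classical
  intro t
  induction t with
  | zero =>
      intro x u β hβ hbg _
      have hβe : β = ∅ := Finset.card_eq_zero.mp hβ
      have hu : u = fun _ => x := funext fun j => hbg j (by simp [hβe])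
      rw [hu]
  | succ r IH =>
      intro x u β hβ hbg hfree
      have hβne : β.Nonempty := Finset.card_pos.mp (by omega)
      obtain ⟨j₁, hj₁⟩ := hβne
      have hcard' : (β.erase j₁).card = r := by
        rw [Finset.card_erase_of_mem hj₁, hβ]
        omega
      -- out-domination
      have hout : ∀ v, E (φ (fun _ => x)) v → E (φ u) v := by
        intro v hv
        have hxx' : E x (g v) := by
          have h := hg _ _ hv
          rwa [hge x] at h
        have hwit : ∀ p : Fin n, ∃ w : A,
            p ∈ β.erase j₁ → E (u p) w ∧ Qrel E (r-1) (g v) w := by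
          intro p
          by_cases hp : p ∈ β.erase j₁
          · cases r with
            | zero =>
                exfalso
                have hempty : β.erase j₁ = ∅ := Finset.card_eq_zero.mp hcard'
                rw [hempty] at hp
                exact absurd hp (Finset.notMem_empty p)
            | succ r' =>
                have hq : Qrel E (r'+1) x (u p) := hfree p (Finset.mem_of_mem_erase hp)
                obtain ⟨w, hw1, hw2⟩ := hq.1 (g v) hxx'
                exact ⟨w, fun _ => ⟨hw1, hw2⟩⟩
          · exact ⟨g v, fun h => absurd h hp⟩
        choose w hw using hwit
        set v' : Fin n → A := fun p => if p ∈ β.erase j₁ then w p else g v with hv'def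
        have hmem : ∀ p, p ∈ β.erase j₁ → v' p = w p := by
          intro p hp
          simp only [hv'def]
          exact if_pos hp
        have hnomem : ∀ p, p ∉ β.erase j₁ → v' p = g v := by
          intro p hp
          simp only [hv'def]
          exact if_neg hp
        have hgood : ∀ p : Fin n, p ≠ j₁ → E (u p) (v' p) := by
          intro p hp
          by_cases hpm : p ∈ β.erase j₁
          · rw [hmem p hpm]
            exact (hw p hpm).1
          · have hpβ : p ∉ β := by
              intro hpβ
              exact hpm (Finset.mem_erase.mpr ⟨hp, hpβ⟩)
            rw [hnomem p hpm, hbg p hpβ]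
            exact hxx'
        have htol : TolRel E n u v' := by
          intro p q hbp hbq
          have hp1 : p = j₁ := by
            by_contra h
            exact hbp (hgood p h)
          have hq1 : q = j₁ := by
            by_contra h
            exact hbq (hgood q h)
          exact hp1.trans hq1.symm
        have hEφ := hφ _ _ htol
        have hv'val : φ v' = φ (fun _ => g v) := by
          apply IH (g v) v' (β.erase j₁) hcard'
          · intro p hp
            exact hnomem p hp
          · intro p hp
            rw [hmem p hp]
            exact (hw p hp).2
        rw [hv'val, heg v] at hEφ
        exact hEφ
      -- in-domination
      have hin : ∀ u₀, E u₀ (φ (fun _ => x)) → E u₀ (φ u) := by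
        intro u₀ hu₀
        have hxx' : E (g u₀) x := by
          have h := hg _ _ hu₀
          rwa [hge x] at h
        have hwit : ∀ p : Fin n, ∃ w : A,
            p ∈ β.erase j₁ → E w (u p) ∧ Qrel E (r-1) (g u₀) w := by
          intro p
          by_cases hp : p ∈ β.erase j₁
          · cases r with
            | zero =>
                exfalso
                have hempty : β.erase j₁ = ∅ := Finset.card_eq_zero.mp hcard'
                rw [hempty] at hp
                exact absurd hp (Finset.notMem_empty p)
            | succ r' =>
                have hq : Qrel E (r'+1) x (u p) := hfree p (Finset.mem_of_mem_erase hp)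
                obtain ⟨w, hw1, hw2⟩ := hq.2 (g u₀) hxx'
                exact ⟨w, fun _ => ⟨hw1, hw2⟩⟩
          · exact ⟨g u₀, fun h => absurd h hp⟩
        choose w hw using hwit
        set v' : Fin n → A := fun p => if p ∈ β.erase j₁ then w p else g u₀ with hv'def
        have hmem : ∀ p, p ∈ β.erase j₁ → v' p = w p := by
          intro p hp
          simp only [hv'def]
          exact if_pos hp
        have hnomem : ∀ p, p ∉ β.erase j₁ → v' p = g u₀ := by
          intro p hp
          simp only [hv'def]
          exact if_neg hp
        have hgood : ∀ p : Fin n, p ≠ j₁ → E (v' p) (u p) := by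
          intro p hp
          by_cases hpm : p ∈ β.erase j₁
          · rw [hmem p hpm]
            exact (hw p hpm).1
          · have hpβ : p ∉ β := by
              intro hpβ
              exact hpm (Finset.mem_erase.mpr ⟨hp, hpβ⟩)
            rw [hnomem p hpm, hbg p hpβ]
            exact hxx'
        have htol : TolRel E n v' u := by
          intro p q hbp hbq
          have hp1 : p = j₁ := by
            by_contra h
            exact hbp (hgood p h)
          have hq1 : q = j₁ := by
            by_contra h
            exact hbq (hgood q h)
          exact hp1.trans hq1.symm
        have hEφ := hφ _ _ htol
        have hv'val : φ v' = φ (fun _ => g u₀) := by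
          apply IH (g u₀) v' (β.erase j₁) hcard'
          · intro p hp
            exact hnomem p hp
          · intro p hp
            rw [hmem p hp]
            exact (hw p hp).2
        rw [hv'val, heg u₀] at hEφ
        exact hEφ
      exact hrepl (φ (fun _ => x)) (φ u) hout hin

end Stmt11Aux

/-- For a finite core digraph with finite duality, every homomorphism from a one-tolerant
power `¹Aⁿ` to `A` is a near-unanimity operation. -/
theorem stmt11 (A : Type) [Fintype A] (E : A → A → Prop)
    (hcore : ∀ f : A → A, Hom E E f → Function.Bijective f)
    (hfd : FiniteDuality A E) :
    ∀ (n : ℕ) (φ : (Fin n → A) → A), Hom (TolRel E n) E φ →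
      ∀ (x y : A) (i : Fin n), φ (Function.update (fun _ => x) i y) = x := by
  classical
  intro n φ hφ x y i
  by_cases hss : ∀ a b : A, a = b
  · exact hss _ _
  push_neg at hss
  obtain ⟨a₀, b₀, hab⟩ := hss
  -- A is loopless
  have hnl : ∀ a, ¬ E a a := by
    intro a ha
    have hconst : Hom E E (fun _ => a) := fun _ _ _ => ha
    exact hab ((hcore _ hconst).injective rfl)
  rcases Nat.lt_or_ge n 2 with hn | hn
  · rcases Nat.lt_or_ge n 1 with h0 | h1
    · exact absurd i.isLt (by omega)
    · -- n = 1 : the one-tolerant power has a loop, contradiction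
      have hloop : TolRel E n (fun _ => a₀) (fun _ => a₀) := by
        intro p q _ _
        have hp := p.isLt
        have hq := q.isLt
        apply Fin.ext
        omega
      exact absurd (hφ _ _ hloop) (hnl _)
  · -- main case: n ≥ 2
    have he_hom : Hom E E (fun a => φ fun _ => a) := by
      intro a b hab'
      apply hφ
      intro p q hp _
      exact absurd hab' hp
    obtain ⟨g, hg, hge, heg⟩ := Stmt11Aux.exists_inv hcore he_hom
    have hrepl : ∀ x m : A, (∀ v, E x v → E m v) → (∀ u, E u x → E u m) → m = x :=
      fun x m hout hin => Stmt11Aux.repl hcore hnl x m hout hin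
    have hmaster := Stmt11Aux.master hφ hg hge heg hrepl
    -- rigidity: φ ∘ diagonal = identity
    have hfix : ∀ a : A, φ (fun _ => a) = a := by
      intro a
      have hℓpos : (0 : ℕ) < n := by omega
      set ℓ : Fin n := ⟨0, hℓpos⟩ with hℓdef
      set u : Fin n → A := Function.update (fun _ => φ (fun _ => a)) ℓ a with hu_def
      have h1 : φ u = φ (fun _ => a) := by
        apply hmaster (n-1) a u (Finset.univ.erase ℓ)
        · rw [Finset.card_erase_of_mem (Finset.mem_univ ℓ), Finset.card_univ, Fintype.card_fin]
        · intro j hj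
          have hjℓ : j = ℓ := by
            by_contra h
            exact hj (Finset.mem_erase.mpr ⟨h, Finset.mem_univ j⟩)
          rw [hjℓ, hu_def]
          simp
        · intro j hj
          have hjℓ : j ≠ ℓ := (Finset.mem_erase.mp hj).1
          have hval : u j = φ (fun _ => a) := by
            rw [hu_def]
            simp [Function.update_of_ne hjℓ]
          rw [hval]
          exact Stmt11Aux.Qrel_endo he_hom _ a
      have h2 : φ u = φ (fun _ => φ (fun _ => a)) := by
        apply hmaster 1 (φ (fun _ => a)) u {ℓ}
        · exact Finset.card_singleton ℓ
        · intro j hj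
          have hjℓ : j ≠ ℓ := by simpa using hj
          rw [hu_def]
          simp [Function.update_of_ne hjℓ]
        · intro j _
          trivial
      have h3 : φ (fun _ => a) = φ (fun _ => φ (fun _ => a)) := h1.symm.trans h2
      have h4 := (hcore _ he_hom).injective h3
      exact h4.symm
    have hgoal : φ (Function.update (fun _ => x) i y) = φ (fun _ => x) := by
      apply hmaster 1 x _ {i}
      · exact Finset.card_singleton i
      · intro j hj
        have hji : j ≠ i := by simpa using hj
        simp [Function.update_of_ne hji]
      · intro j _
        trivial
    exact hgoal.trans (hfix x)
end

section
/- Every finite core digraph with a finite complete set of obstructions admits a near-unanimity operation of some arity n ≥ 3, i.e., a homomorphism f : Aⁿ → A with f(y,x,…,x) = f(x,y,…,x) = … = f(x,…,x,y) = x. -/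
/-- Categorical `m`-th power of a digraph: componentwise arcs. -/
def PowRel {A : Type*} (E : A → A → Prop) (m : ℕ) :
    (Fin m → A) → (Fin m → A) → Prop :=
  fun a b => ∀ i, E (a i) (b i)

/-- `t` is near-constant with majority value `x`. -/
def Near {A : Type} {n : ℕ} (x : A) (t : Fin n → A) : Prop :=
  ∃ i y, t = Function.update (fun _ => x) i y

def nearRel {A : Type} {n : ℕ} (t s : Fin n → A) : Prop :=
  t = s ∨ ∃ x, Near x t ∧ Near x s

lemma exists_ne_pair {n : ℕ} (hn : 3 ≤ n) (i i' : Fin n) :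
    ∃ j : Fin n, j ≠ i ∧ j ≠ i' := by
  by_contra hcon
  push_neg at hcon
  have hsub : (Finset.univ : Finset (Fin n)) ⊆ {i, i'} := by
    intro j _
    rcases eq_or_ne j i with rfl | hj
    · exact Finset.mem_insert_self _ _
    · have := hcon j hj
      subst this
      exact Finset.mem_insert_of_mem (Finset.mem_singleton_self _)
  have h1 := Finset.card_le_card hsub
  have h2 := Finset.card_insert_le i ({i'} : Finset (Fin n))
  simp [Finset.card_univ] at h1 h2
  omega

lemma nearRel_equiv {A : Type} {n : ℕ} (hn : 3 ≤ n) :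
    Equivalence (@nearRel A n) := by
  constructor
  · intro t; exact Or.inl rfl
  · intro t s h
    rcases h with rfl | ⟨x, ht, hs⟩
    · exact Or.inl rfl
    · exact Or.inr ⟨x, hs, ht⟩
  · intro t s u hts hsu
    rcases hts with rfl | ⟨x, ht, hs⟩
    · exact hsu
    rcases hsu with rfl | ⟨x', hs', hu⟩
    · exact Or.inr ⟨x, ht, hs⟩
    · obtain ⟨i, y, rfl⟩ := hs
      obtain ⟨i', y', he⟩ := hs'
      obtain ⟨j, hj1, hj2⟩ := exists_ne_pair hn i i'
      have e1 : Function.update (fun _ => x) i y j = x := Function.update_of_ne hj1 _ _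
      have e2 : Function.update (fun _ => x') i' y' j = x' := Function.update_of_ne hj2 _ _
      have exx : x = x' := by rw [← e1, he, e2]
      subst exx
      exact Or.inr ⟨x, ht, hu⟩

def nearSetoid (A : Type) (n : ℕ) (hn : 3 ≤ n) : Setoid (Fin n → A) :=
  ⟨nearRel, nearRel_equiv hn⟩

def QRel {A : Type} (E : A → A → Prop) {n : ℕ} (hn : 3 ≤ n) :
    Quotient (nearSetoid A n hn) → Quotient (nearSetoid A n hn) → Prop :=
  fun a b => ∃ t s, Quotient.mk _ t = a ∧ Quotient.mk _ s = b ∧ PowRel E n t s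

lemma rel_diff {A : Type} {n : ℕ} (hn : 3 ≤ n) {t t' : Fin n → A}
    (h : nearRel t t') :
    ∃ i₁ i₂ : Fin n, ∀ j, j ≠ i₁ → j ≠ i₂ → t j = t' j := by
  have i0 : Fin n := ⟨0, by omega⟩
  rcases h with rfl | ⟨x, ⟨i, y, rfl⟩, ⟨i', y', rfl⟩⟩
  · exact ⟨i0, i0, fun _ _ _ => rfl⟩
  · exact ⟨i, i', fun j h1 h2 => by
      rw [Function.update_of_ne h1, Function.update_of_ne h2]⟩

lemma compactness {A : Type} [Fintype A] (E : A → A → Prop)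
    (W : Type) (F : W → W → Prop)
    (h : ∀ S : Finset W, ∃ f : {x // x ∈ S} → A,
      Hom (fun u v : {x // x ∈ S} => F u.1 v.1) E f) :
    ∃ f : W → A, Hom F E f := by
  classical
  rcases isEmpty_or_nonempty A with hA | hA
  · rcases isEmpty_or_nonempty W with hW | hW
    · exact ⟨isEmptyElim, fun u => isEmptyElim u⟩
    · obtain ⟨w⟩ := hW
      obtain ⟨f, -⟩ := h {w}
      exact (IsEmpty.false (f ⟨w, Finset.mem_singleton_self w⟩)).elim
  · have : Inhabited A := Classical.inhabited_of_nonempty hA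
    choose F' hF' using h
    let g : Finset W → W → A := fun Sw w =>
      if hw : w ∈ Sw then F' Sw ⟨w, hw⟩ else default
    let U : Ultrafilter (Finset W) := Ultrafilter.of Filter.atTop
    have hU : (U : Filter (Finset W)) ≤ Filter.atTop := Ultrafilter.of_le _
    have hval : ∀ w : W, ∃ a : A, {Sw : Finset W | g Sw w = a} ∈ U := by
      intro w
      have hu : (⋃ a ∈ (Set.univ : Set A), {Sw : Finset W | g Sw w = a}) ∈ U := by
        have he : (⋃ a ∈ (Set.univ : Set A), {Sw : Finset W | g Sw w = a}) = Set.univ := by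
          ext Sw; simp
        rw [he]; exact Filter.univ_mem
      obtain ⟨a, -, ha⟩ := (Ultrafilter.finite_biUnion_mem_iff Set.finite_univ).mp hu
      exact ⟨a, ha⟩
    choose f hf using hval
    refine ⟨f, ?_⟩
    intro u v huv
    have h1 : {Sw : Finset W | ({u, v} : Finset W) ≤ Sw} ∈ U :=
      hU (Filter.mem_atTop ({u, v} : Finset W))
    have hmem : ({Sw : Finset W | ({u, v} : Finset W) ≤ Sw} ∩
        ({Sw : Finset W | g Sw u = f u} ∩ {Sw : Finset W | g Sw v = f v})) ∈ U :=
      Filter.inter_mem h1 (Filter.inter_mem (hf u) (hf v))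
    obtain ⟨Sw, hSw1, hSw2, hSw3⟩ := Ultrafilter.nonempty_of_mem hmem
    have hu' : u ∈ Sw := hSw1 (by simp)
    have hv' : v ∈ Sw := hSw1 (by simp)
    have hE := hF' Sw ⟨u, hu'⟩ ⟨v, hv'⟩ huv
    rw [← hSw2, ← hSw3]
    show E (g Sw u) (g Sw v)
    simp only [g, dif_pos hu', dif_pos hv']
    exact hE

lemma hom_of_quot {A : Type} {E : A → A → Prop} {n : ℕ} (hn : 3 ≤ n)
    {W : Type} {F : W → W → Prop} (S : Finset W) (T : Finset (W × W))
    (hT : ∀ u v : W, u ∈ S → v ∈ S → F u v → (u, v) ∈ T)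
    (hcard : 4 * T.card < n)
    (g : W → Quotient (nearSetoid A n hn)) (hg : Hom F (QRel E hn) g) :
    ∃ f : {x // x ∈ S} → A, Hom (fun u v : {x // x ∈ S} => F u.1 v.1) E f := by
  classical
  have key : ∀ p : W × W, ∃ bad : Finset (Fin n), bad.card ≤ 4 ∧
      (F p.1 p.2 → ∀ j ∉ bad, E ((g p.1).out j) ((g p.2).out j)) := by
    intro p
    by_cases hF : F p.1 p.2
    · obtain ⟨t, s', ht, hs, hts⟩ := hg p.1 p.2 hF
      have h1 : nearRel t ((g p.1).out) :=
        Quotient.exact (ht.trans (Quotient.out_eq _).symm)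
      have h2 : nearRel s' ((g p.2).out) :=
        Quotient.exact (hs.trans (Quotient.out_eq _).symm)
      obtain ⟨a1, a2, hd1⟩ := rel_diff hn h1
      obtain ⟨b1, b2, hd2⟩ := rel_diff hn h2
      refine ⟨{a1, a2, b1, b2}, ?_, ?_⟩
      · have t1 := Finset.card_insert_le a1 ({a2, b1, b2} : Finset (Fin n))
        have t2 := Finset.card_insert_le a2 ({b1, b2} : Finset (Fin n))
        have t3 := Finset.card_insert_le b1 ({b2} : Finset (Fin n))
        have t4 : ({b2} : Finset (Fin n)).card = 1 := Finset.card_singleton b2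
        omega
      · intro _ j hj
        simp only [Finset.mem_insert, Finset.mem_singleton, not_or] at hj
        obtain ⟨hj1, hj2, hj3, hj4⟩ := hj
        rw [← hd1 j hj1 hj2, ← hd2 j hj3 hj4]
        exact hts j
    · exact ⟨∅, by simp, fun h => absurd h hF⟩
  choose bad hbc hbE using key
  set Bad : Finset (Fin n) := T.biUnion bad with hBad
  have hBadcard : Bad.card ≤ 4 * T.card := by
    refine le_trans (Finset.card_biUnion_le) ?_
    calc (∑ p ∈ T, (bad p).card) ≤ ∑ _p ∈ T, 4 := Finset.sum_le_sum fun p _ => hbc p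
    _ = 4 * T.card := by rw [Finset.sum_const]; ring
  have hj : ∃ j : Fin n, j ∉ Bad := by
    by_contra hcon
    push_neg at hcon
    have hBu : Bad = Finset.univ := Finset.eq_univ_iff_forall.mpr hcon
    have hcardB : Bad.card = n := by
      rw [hBu, Finset.card_univ, Fintype.card_fin]
    omega
  obtain ⟨j, hjB⟩ := hj
  refine ⟨fun u => (g u.1).out j, ?_⟩
  intro u v huv
  have hp : (u.1, v.1) ∈ T := hT _ _ u.2 v.2 huv
  refine hbE (u.1, v.1) huv j ?_
  intro hjbad
  exact hjB (Finset.mem_biUnion.mpr ⟨_, hp, hjbad⟩)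

lemma nu_of_quotHom {A : Type} [Fintype A] {E : A → A → Prop}
    (hcore : ∀ f : A → A, Hom E E f → Function.Bijective f)
    {n : ℕ} (hn : 3 ≤ n)
    (hex : ∃ h : Quotient (nearSetoid A n hn) → A, Hom (QRel E hn) E h) :
    ∃ f : (Fin n → A) → A, Hom (PowRel E n) E f ∧
      ∀ (x y : A) (i : Fin n), f (Function.update (fun _ => x) i y) = x := by
  classical
  obtain ⟨h, hh⟩ := hex
  set σ : A → A := fun x => h (Quotient.mk _ (fun _ : Fin n => x)) with hσdef
  have hσ : Hom E E σ := fun x y hxy =>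
    hh _ _ ⟨fun _ => x, fun _ => y, rfl, rfl, fun _ => hxy⟩
  have hbij := hcore σ hσ
  have hrep : ∃ p : ℕ, 0 < p ∧ ∀ x, σ^[p] x = x := by
    obtain ⟨a, b, hab, hfab⟩ :=
      Finite.exists_ne_map_eq_of_infinite (fun k : ℕ => σ^[k])
    have key2 : ∀ a b : ℕ, a < b → σ^[a] = σ^[b] → ∃ p, 0 < p ∧ ∀ x, σ^[p] x = x := by
      intro a b hlt he
      refine ⟨b - a, by omega, fun x => ?_⟩
      have hinj : Function.Injective (σ^[a]) := hbij.1.iterate a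
      apply hinj
      rw [← Function.iterate_add_apply, show a + (b - a) = b by omega, ← he]
    rcases lt_or_gt_of_ne hab with hlt | hlt
    · exact key2 a b hlt hfab
    · exact key2 b a hlt hfab.symm
  obtain ⟨p, hp, hid⟩ := hrep
  have hiter : ∀ m : ℕ, Hom E E (σ^[m]) := by
    intro m
    induction m with
    | zero => intro u v huv; simpa using huv
    | succ m ih =>
      intro u v huv
      rw [Function.iterate_succ_apply', Function.iterate_succ_apply']
      exact hσ _ _ (ih u v huv)
  refine ⟨fun t => σ^[p - 1] (h (Quotient.mk _ t)), ?_, ?_⟩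
  · intro t s hts
    exact hiter (p - 1) _ _ (hh _ _ ⟨t, s, rfl, rfl, hts⟩)
  · intro x y i
    have hq : Quotient.mk (nearSetoid A n hn) (Function.update (fun _ => x) i y) =
        Quotient.mk (nearSetoid A n hn) (fun _ => x) := by
      apply Quotient.sound
      exact Or.inr ⟨x, ⟨i, y, rfl⟩, ⟨i, x, (Function.update_eq_self i _).symm⟩⟩
    show σ^[p - 1] (h (Quotient.mk (nearSetoid A n hn)
      (Function.update (fun _ => x) i y))) = x
    rw [hq]
    show σ^[p - 1] (σ x) = x
    rw [← Function.iterate_succ_apply, show (p - 1).succ = p by omega]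
    exact hid x

/-- Every finite core digraph with a finite complete set of obstructions admits a
near-unanimity operation of some arity `n ≥ 3`. -/
theorem stmt12 (A : Type) [Fintype A] (E : A → A → Prop)
    (hcore : ∀ f : A → A, Hom E E f → Function.Bijective f)
    (hfd : FiniteDuality A E) :
    ∃ (n : ℕ), 3 ≤ n ∧ ∃ f : (Fin n → A) → A, Hom (PowRel E n) E f ∧
      ∀ (x y : A) (i : Fin n), f (Function.update (fun _ => x) i y) = x := by
  classical
  obtain ⟨k, W, F, hdual⟩ := hfd
  have hWnoA : ∀ i, ¬ ∃ f : W i → A, Hom (F i) E f := fun i =>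
    (hdual (W i) (F i)).mpr ⟨i, id, fun u v h => h⟩
  have hS : ∀ i, ∃ S : Finset (W i), ¬ ∃ f : {x // x ∈ S} → A,
      Hom (fun u v : {x // x ∈ S} => F i u.1 v.1) E f := by
    intro i
    by_contra hc
    push_neg at hc
    exact hWnoA i (compactness E (W i) (F i) hc)
  choose S hSno using hS
  set m := Finset.univ.sup
    (fun i : Fin k => ((S i ×ˢ S i).filter fun p => F i p.1 p.2).card) with hm
  have hn3 : 3 ≤ 4 * m + 3 := by omega
  refine ⟨4 * m + 3, by omega, ?_⟩
  apply nu_of_quotHom hcore hn3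
  by_contra hc
  obtain ⟨i, g, hg⟩ := (hdual _ (QRel E hn3)).mp hc
  refine hSno i ?_
  refine hom_of_quot hn3 (S i) ((S i ×ˢ S i).filter fun p => F i p.1 p.2) ?_ ?_ g hg
  · intro u v hu hv hF
    simp [Finset.mem_filter, Finset.mem_product, hu, hv, hF]
  · have hle := Finset.le_sup
      (f := fun i : Fin k => ((S i ×ˢ S i).filter fun p => F i p.1 p.2).card)
      (Finset.mem_univ i)
    rw [← hm] at hle
    omega
end

section
/- For any fixed finite relational vocabulary σ and any integer n ≥ 0, the number of (isomorphism classes of) σ-trees that are cores and have diameter at most n is finite. -/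
/-!
Root the incidence tree at any vertex. The branch below an element `a`, truncated at a given
depth, has a code taken from a finite set: the set of patterns of the child blocks of `a`,
where a pattern records the relation symbol and, coordinatewise, either the position of `a` or
the code of the child element sitting there. If two child blocks of `a` had the same pattern,
folding the branch below one onto the branch below the other (recursively, along equal codes)
would be a non-injective endomorphism, which a core does not have. So an element has at most
as many child blocks as there are patterns, a block has at most the maximal arity many child
elements, and the depth is at most `2 n`: the core tree has boundedly many elements. Finally,
structures of bounded size fall into finitely many isomorphism classes.
-/

/-- Homomorphism of σ-structures. -/
def SHom {ι : Type} (arity : ι → ℕ) {A B : Type}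
    (R : ∀ i, Set (Fin (arity i) → A)) (S : ∀ i, Set (Fin (arity i) → B))
    (f : A → B) : Prop :=
  ∀ i, ∀ t ∈ R i, (f ∘ t) ∈ S i

/-- Vertices of the incidence multigraph: elements and blocks (hyperedges). -/
def IncVert {ι : Type} (arity : ι → ℕ) (A : Type)
    (R : ∀ i, Set (Fin (arity i) → A)) : Type :=
  A ⊕ (Σ i : ι, {t : Fin (arity i) → A // t ∈ R i})

/-- Adjacency in the incidence multigraph. -/
def IncAdj {ι : Type} (arity : ι → ℕ) {A : Type}
    (R : ∀ i, Set (Fin (arity i) → A)) :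
    IncVert arity A R → IncVert arity A R → Prop :=
  fun u v => ∃ (i : ι) (t : Fin (arity i) → A) (ht : t ∈ R i) (j : Fin (arity i)),
    (u = Sum.inl (t j) ∧ v = Sum.inr ⟨i, t, ht⟩) ∨
    (v = Sum.inl (t j) ∧ u = Sum.inr ⟨i, t, ht⟩)

/-- Number of hyperedges (blocks). -/
noncomputable def BlockCount {ι : Type} (arity : ι → ℕ) {A : Type}
    (R : ∀ i, Set (Fin (arity i) → A)) : ℕ :=
  Set.ncard {p : Σ i : ι, Fin (arity i) → A | p.2 ∈ R p.1}

/-- Number of edges of the incidence multigraph (coordinate occurrences). -/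
noncomputable def IncEdgeCount {ι : Type} (arity : ι → ℕ) {A : Type}
    (R : ∀ i, Set (Fin (arity i) → A)) : ℕ :=
  Set.ncard {p : Σ i : ι, (Fin (arity i) → A) × Fin (arity i) | p.2.1 ∈ R p.1}

/-- A finite σ-structure is a σ-tree when its incidence multigraph is connected and has
exactly one edge fewer than it has vertices (i.e. it is a tree). -/
def IsTreeStruct {ι : Type} (arity : ι → ℕ) {A : Type}
    (R : ∀ i, Set (Fin (arity i) → A)) : Prop :=
  (∀ u v : IncVert arity A R, Relation.ReflTransGen (IncAdj arity R) u v) ∧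
    IncEdgeCount arity R + 1 = Nat.card A + BlockCount arity R

/-- Reachability within `k` steps. -/
def ReachIn {V : Type} (adj : V → V → Prop) : ℕ → V → V → Prop
  | 0 => fun u v => u = v
  | (k + 1) => fun u v => u = v ∨ ∃ w, adj u w ∧ ReachIn adj k w v

namespace SimpleGraph

lemma exists_walk_length_le_of_reachIn {V : Type} {G : SimpleGraph V} {u v : V} {k : ℕ}
    (h : ReachIn G.Adj k u v) : ∃ p : G.Walk u v, p.length ≤ k := by
  induction k generalizing u with
  | zero => exact ⟨h ▸ Walk.nil, by cases h; simp⟩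
  | succ k ih =>
    rcases h with rfl | ⟨w, hadj, h⟩
    · exact ⟨Walk.nil, by simp⟩
    · obtain ⟨p, hp⟩ := ih h
      exact ⟨Walk.cons hadj p, by simpa using hp⟩

lemma dist_le_of_reachIn {V : Type} {G : SimpleGraph V} {u v : V} {k : ℕ}
    (h : ReachIn G.Adj k u v) : G.dist u v ≤ k :=
  let ⟨p, hp⟩ := exists_walk_length_le_of_reachIn h
  (dist_le p).trans hp

variable {V : Type*} {G : SimpleGraph V} {r u v w : V}

lemma Connected.exists_adj_dist_add_one_eq (hG : G.Connected) (huv : u ≠ v) :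
    ∃ w, G.Adj u w ∧ G.dist w v + 1 = G.dist u v := by
  obtain ⟨p, hp⟩ := hG.exists_walk_length_eq_dist u v
  cases p with
  | nil => exact absurd rfl huv
  | @cons _ w _ hadj q =>
    have hq := dist_le q
    have htri := hG.dist_triangle (u := u) (v := w) (w := v)
    rw [dist_eq_one_iff_adj.2 hadj] at htri
    simp only [Walk.length_cons] at hp
    exact ⟨_, hadj, by omega⟩

/-- When `G` is a tree rooted at `r`, these are the descendants of `v`, including `v`. -/
def subtree (G : SimpleGraph V) (r v : V) : Set V :=
  {u | G.dist r u = G.dist r v + G.dist v u}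

def children (G : SimpleGraph V) (r v : V) : Set V :=
  {w | G.Adj v w ∧ G.dist r w = G.dist r v + 1}

lemma self_mem_subtree : v ∈ G.subtree r v := by
  simp [subtree]

lemma dist_le_of_mem_subtree (h : u ∈ G.subtree r v) : G.dist r v ≤ G.dist r u :=
  h ▸ Nat.le_add_right _ _

lemma Connected.dist_lt_of_mem_subtree (hG : G.Connected) (h : u ∈ G.subtree r v)
    (hne : u ≠ v) : G.dist r v < G.dist r u := by
  have := hG.pos_dist_of_ne hne.symm
  rw [h]
  omega

lemma mem_subtree_of_mem_children (h : w ∈ G.children r v) : w ∈ G.subtree r v := by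
  rw [subtree, Set.mem_ofPred_eq, dist_eq_one_iff_adj.2 h.1, h.2]

lemma Connected.subtree_subset (hG : G.Connected) (h : w ∈ G.subtree r v) :
    G.subtree r w ⊆ G.subtree r v := fun u hu => by
  have h₁ := hG.dist_triangle (u := r) (v := v) (w := u)
  have h₂ := hG.dist_triangle (u := v) (v := w) (w := u)
  simp only [subtree, Set.mem_ofPred_eq] at h hu ⊢
  omega

lemma Connected.exists_child_mem_subtree (hG : G.Connected) (h : u ∈ G.subtree r v)
    (hne : u ≠ v) : ∃ w ∈ G.children r v, u ∈ G.subtree r w := by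
  obtain ⟨w, hadj, hw⟩ := hG.exists_adj_dist_add_one_eq hne.symm
  have h₁ := hG.dist_triangle (u := r) (v := v) (w := w)
  have h₂ := hG.dist_triangle (u := r) (v := w) (w := u)
  rw [dist_eq_one_iff_adj.2 hadj] at h₁
  simp only [subtree, children, Set.mem_ofPred_eq] at h ⊢
  exact ⟨w, ⟨hadj, by omega⟩, by omega⟩

lemma Connected.exists_parent_mem_subtree (hG : G.Connected) (h : u ∈ G.subtree r v)
    (hne : u ≠ v) : ∃ w, G.Adj u w ∧ G.dist r w + 1 = G.dist r u ∧ w ∈ G.subtree r v := by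
  obtain ⟨w, hadj, hw⟩ := hG.exists_adj_dist_add_one_eq hne
  have h₁ := hG.dist_triangle (u := r) (v := v) (w := w)
  have h₂ := hG.dist_triangle (u := r) (v := w) (w := u)
  rw [dist_eq_one_iff_adj.2 hadj.symm] at h₂
  rw [dist_comm (u := w), dist_comm (u := u)] at hw
  simp only [subtree, Set.mem_ofPred_eq] at h ⊢
  exact ⟨w, hadj, by omega, by omega⟩

/-- The geodesic from the root to `u` passes through a unique vertex at each distance. -/
lemma IsTree.eq_of_mem_subtree {v₁ v₂ : V} (hG : G.IsTree) (h₁ : u ∈ G.subtree r v₁)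
    (h₂ : u ∈ G.subtree r v₂) (hd : G.dist r v₁ = G.dist r v₂) : v₁ = v₂ := by
  obtain ⟨p₁, hp₁⟩ := hG.connected.exists_walk_length_eq_dist r v₁
  obtain ⟨q₁, hq₁⟩ := hG.connected.exists_walk_length_eq_dist v₁ u
  obtain ⟨p₂, hp₂⟩ := hG.connected.exists_walk_length_eq_dist r v₂
  obtain ⟨q₂, hq₂⟩ := hG.connected.exists_walk_length_eq_dist v₂ u
  have hpath₁ := (p₁.append q₁).isPath_of_length_eq_dist (by simp [hp₁, hq₁, h₁.symm])
  have hpath₂ := (p₂.append q₂).isPath_of_length_eq_dist (by simp [hp₂, hq₂, h₂.symm])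
  have heq := (hG.existsUnique_path r u).unique hpath₁ hpath₂
  have := congrArg (·.getVert (G.dist r v₁)) heq
  simpa [Walk.getVert_append, hp₁, hp₂, hd] using this

lemma IsTree.eq_of_adj_of_dist_add_one_eq {w₁ w₂ : V} (hG : G.IsTree) (h₁ : G.Adj u w₁)
    (h₂ : G.Adj u w₂) (hd₁ : G.dist r w₁ + 1 = G.dist r u)
    (hd₂ : G.dist r w₂ + 1 = G.dist r u) : w₁ = w₂ :=
  hG.eq_of_mem_subtree (mem_subtree_of_mem_children ⟨h₁.symm, hd₁.symm⟩)
    (mem_subtree_of_mem_children ⟨h₂.symm, hd₂.symm⟩) (by omega)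

/-- A subtree is closed under adjacency, except for the parent of its top vertex. -/
lemma IsTree.mem_subtree_of_adj (hG : G.IsTree) (h : u ∈ G.subtree r v) (hadj : G.Adj u w)
    (htop : u = v → G.dist r u < G.dist r w) : w ∈ G.subtree r v := by
  rcases hG.dist_eq_dist_add_one_of_adj r hadj with hd | hd
  · obtain rfl | hne := eq_or_ne u v
    · have := htop rfl; omega
    obtain ⟨w', hadj', hd', hw'⟩ := hG.connected.exists_parent_mem_subtree h hne
    rwa [hG.eq_of_adj_of_dist_add_one_eq hadj hadj' hd.symm hd']
  · exact hG.connected.subtree_subset h (mem_subtree_of_mem_children ⟨hadj, hd⟩)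

lemma Connected.ncard_dist_eq_le_pow [Finite V] (hG : G.Connected) {C : ℕ}
    (hC : ∀ v, (G.children r v).ncard ≤ C) (d : ℕ) :
    {v | G.dist r v = d}.ncard ≤ C ^ d := by
  induction d with
  | zero =>
    have : {v | G.dist r v = 0} ⊆ {r} := fun v hv =>
      ((hG.preconnected r v).dist_eq_zero_iff.1 hv).symm
    simpa using Set.ncard_le_ncard this
  | succ d ih =>
    let level := (Set.toFinite {v | G.dist r v = d}).toFinset
    have hsub : {v | G.dist r v = d + 1} ⊆ ⋃ u ∈ level, G.children r u := fun v hv => by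
      replace hv : G.dist r v = d + 1 := hv
      have hne : v ≠ r := fun h => by simp [h] at hv
      obtain ⟨u, hadj, hu⟩ := hG.exists_adj_dist_add_one_eq hne
      rw [dist_comm, dist_comm (u := v)] at hu
      simp only [Set.mem_iUnion]
      exact ⟨u, by simp [level]; omega, hadj.symm, by simp_all⟩
    calc {v | G.dist r v = d + 1}.ncard
        ≤ ∑ u ∈ level, (G.children r u).ncard :=
          (Set.ncard_le_ncard hsub).trans (level.set_ncard_biUnion_le _)
      _ ≤ ∑ _u ∈ level, C := Finset.sum_le_sum fun u _ => hC u
      _ ≤ C ^ (d + 1) := by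
          rw [Finset.sum_const, smul_eq_mul, pow_succ, ← Set.ncard_eq_toFinset_card]
          exact Nat.mul_le_mul_right _ ih

lemma Connected.nat_card_le_sum_pow [Finite V] (hG : G.Connected) {C D : ℕ}
    (hC : ∀ v, (G.children r v).ncard ≤ C) (hD : ∀ v, G.dist r v ≤ D) :
    Nat.card V ≤ ∑ d ∈ Finset.range (D + 1), C ^ d := by
  have hcover : (Set.univ : Set V) ⊆ ⋃ d ∈ Finset.range (D + 1), {v | G.dist r v = d} :=
    fun v _ => by simpa [Nat.lt_succ_iff] using hD v
  calc Nat.card V = (Set.univ : Set V).ncard := Set.ncard_univ V |>.symm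
    _ ≤ ∑ d ∈ Finset.range (D + 1), {v | G.dist r v = d}.ncard :=
        (Set.ncard_le_ncard hcover).trans (Finset.set_ncard_biUnion_le _ _)
    _ ≤ _ := Finset.sum_le_sum fun d _ => hG.ncard_dist_eq_le_pow hC d

end SimpleGraph

section IncidenceGraph

variable {ι : Type} {arity : ι → ℕ} {A : Type} {R : ∀ i, Set (Fin (arity i) → A)}

variable (arity A R) in
abbrev Block : Type := Σ i : ι, {t : Fin (arity i) → A // t ∈ R i}

lemma incAdj_symm {u v : A ⊕ Block arity A R} (h : IncAdj arity R u v) : IncAdj arity R v u := by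
  obtain ⟨i, t, ht, j, h⟩ := h
  exact ⟨i, t, ht, j, h.symm⟩

variable (arity R) in
/-- The incidence graph lives on `A ⊕ Block arity A R` rather than on the definitionally equal
`IncVert arity A R`, so that `Sum.inl a` and `Sum.inr B` have syntactically the vertex type. -/
def incGraph : SimpleGraph (A ⊕ Block arity A R) where
  Adj := IncAdj arity R
  symm := ⟨fun _ _ => incAdj_symm⟩
  loopless := ⟨by
    rintro _ ⟨i, t, ht, j, ⟨h₁, h₂⟩ | ⟨h₁, h₂⟩⟩ <;>
      exact Sum.inl_ne_inr (h₁.symm.trans h₂)⟩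

@[simp]
lemma incGraph_adj {u v : A ⊕ Block arity A R} :
    (incGraph arity R).Adj u v ↔ IncAdj arity R u v :=
  Iff.rfl

lemma incGraph_adj_inr_iff {B : Block arity A R} {v : A ⊕ Block arity A R} :
    (incGraph arity R).Adj (Sum.inr B) v ↔ ∃ j, v = Sum.inl (B.2.1 j) := by
  rw [incGraph_adj]
  constructor
  · rintro ⟨i, t, ht, j, ⟨h₁, -⟩ | ⟨h₁, h₂⟩⟩
    · exact absurd h₁ Sum.inr_ne_inl
    · cases h₂; exact ⟨j, h₁⟩
  · rintro ⟨j, rfl⟩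
    exact ⟨B.1, B.2.1, B.2.2, j, Or.inr ⟨rfl, rfl⟩⟩

lemma incGraph_adj_inl_inr_iff {a : A} {B : Block arity A R} :
    (incGraph arity R).Adj (Sum.inl a) (Sum.inr B) ↔ ∃ j, B.2.1 j = a := by
  rw [SimpleGraph.adj_comm, incGraph_adj_inr_iff]
  simp [eq_comm]

lemma not_incGraph_adj_inl_inl {a b : A} : ¬ (incGraph arity R).Adj (Sum.inl a) (Sum.inl b) := by
  rw [incGraph_adj]
  rintro ⟨i, t, ht, j, ⟨-, h⟩ | ⟨-, h⟩⟩ <;> exact Sum.inl_ne_inr h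

variable (arity R) in
def incEdge (c : Σ B : Block arity A R, Fin (arity B.1)) : (incGraph arity R).edgeSet :=
  ⟨s(Sum.inl (c.1.2.1 c.2), Sum.inr c.1), incGraph_adj_inl_inr_iff.2 ⟨c.2, rfl⟩⟩

lemma incEdge_surjective : Function.Surjective (incEdge arity R) := by
  rintro ⟨e, he⟩
  induction e using Sym2.ind with
  | _ u v =>
  rcases u with a | B <;> rcases v with b | B'
  · exact absurd he not_incGraph_adj_inl_inl
  · obtain ⟨j, rfl⟩ := incGraph_adj_inl_inr_iff.1 he
    exact ⟨⟨B', j⟩, rfl⟩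
  · obtain ⟨j, hj⟩ := incGraph_adj_inr_iff.1 he
    cases hj
    exact ⟨⟨B, j⟩, Subtype.ext Sym2.eq_swap⟩
  · obtain ⟨j, hj⟩ := incGraph_adj_inr_iff.1 he
    exact absurd hj Sum.inr_ne_inl

lemma nat_card_incidence :
    Nat.card (Σ B : Block arity A R, Fin (arity B.1)) = IncEdgeCount arity R := by
  rw [IncEdgeCount, ← Nat.card_coe_set_eq]
  exact Nat.card_congr
    { toFun := fun c => ⟨⟨c.1.1, c.1.2.1, c.2⟩, c.1.2.2⟩
      invFun := fun p => ⟨⟨p.1.1, p.1.2.1, p.2⟩, p.1.2.2⟩ }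

lemma nat_card_incGraph_verts [Finite ι] [Finite A] :
    Nat.card (A ⊕ Block arity A R) = Nat.card A + BlockCount arity R := by
  rw [BlockCount, ← Nat.card_coe_set_eq]
  refine (Nat.card_sum (α := A) (β := Block arity A R)).trans (congrArg _ (Nat.card_congr ?_))
  exact
    { toFun := fun B => ⟨⟨B.1, B.2.1⟩, B.2.2⟩
      invFun := fun p => ⟨p.1.1, p.1.2, p.2⟩ }

/-- Connectedness forces at least `|V| - 1` distinct edges and the Euler count allows at most
`|V| - 1` incidences, so distinct incidences give distinct edges. -/
lemma IsTreeStruct.isTree_and_bijective_incEdge [Finite ι] [Finite A] (h : IsTreeStruct arity R) :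
    (incGraph arity R).IsTree ∧ Function.Bijective (incEdge arity R) := by
  have hV : Nat.card (Σ B : Block arity A R, Fin (arity B.1)) + 1 =
      Nat.card (A ⊕ Block arity A R) := by
    rw [nat_card_incidence, nat_card_incGraph_verts, h.2]
  have : Nonempty (A ⊕ Block arity A R) := Nat.card_pos_iff.1 (by omega) |>.1
  have hconn : (incGraph arity R).Connected :=
    ⟨fun u v => (SimpleGraph.reachable_iff_reflTransGen u v).2 (h.1 u v)⟩
  have hE := Nat.card_le_card_of_surjective _ (incEdge_surjective (arity := arity) (R := R))
  have hE' := hconn.card_vert_le_card_edgeSet_add_one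
  refine ⟨SimpleGraph.isTree_iff_connected_and_card.2 ⟨hconn, by omega⟩,
    incEdge_surjective.bijective_of_nat_card_le (by omega)⟩

lemma IsTreeStruct.isTree [Finite ι] [Finite A] (h : IsTreeStruct arity R) :
    (incGraph arity R).IsTree :=
  h.isTree_and_bijective_incEdge.1

lemma IsTreeStruct.injective_tuple [Finite ι] [Finite A] (h : IsTreeStruct arity R)
    (B : Block arity A R) : Function.Injective B.2.1 := fun j j' hj => by
  have := h.isTree_and_bijective_incEdge.2.1 (a₁ := ⟨B, j⟩) (a₂ := ⟨B, j'⟩)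
    (Subtype.ext (by simp [incEdge, hj]))
  simpa using this

end IncidenceGraph

def BranchCode (ι : Type) (arity : ι → ℕ) : ℕ → Type
  | 0 => PUnit
  | d + 1 => Set (Σ i : ι, Fin (arity i) → Option (BranchCode ι arity d))

instance BranchCode.finite {ι : Type} [Finite ι] {arity : ι → ℕ} :
    ∀ d, Finite (BranchCode ι arity d)
  | 0 => inferInstanceAs (Finite PUnit)
  | d + 1 =>
    have := BranchCode.finite (arity := arity) d
    inferInstanceAs (Finite (Set _))

section blockPattern

variable {A X : Type} {k : ℕ}

open Classical in
noncomputable def blockPattern (c : A → X) (a : A) (t : Fin k → A) : Fin k → Option X :=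
  fun j => if t j = a then none else some (c (t j))

variable {c : A → X} {a b : A} {t t' : Fin k → A}

lemma eq_iff_eq_of_blockPattern_eq (h : blockPattern c a t = blockPattern c b t') (j : Fin k) :
    t j = a ↔ t' j = b := by
  have := congrFun h j
  simp only [blockPattern] at this
  split_ifs at this <;> simp_all

lemma apply_eq_of_blockPattern_eq (h : blockPattern c a t = blockPattern c b t') {j : Fin k}
    (hj : t j ≠ a) : c (t j) = c (t' j) := by
  have := congrFun h j
  simp only [blockPattern, if_neg hj] at this
  split_ifs at this
  exact Option.some.inj this

end blockPattern

section RootedIncidenceTree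

open SimpleGraph

variable {ι : Type} {arity : ι → ℕ} {A : Type} {R : ∀ i, Set (Fin (arity i) → A)}
  (r : A ⊕ Block arity A R)

/-- The branch below `a`, truncated after `d` levels of elements: the set of patterns of the
child blocks of `a`, where `none` marks the position of `a` itself. -/
def branchCode : (d : ℕ) → A → BranchCode ι arity d
  | 0, _ => PUnit.unit
  | d + 1, a => {p | ∃ B : Block arity A R,
      Sum.inr B ∈ (incGraph arity R).children r (Sum.inl a) ∧
        p = ⟨B.1, blockPattern (branchCode d) a B.2.1⟩}

def IsPartner (d : ℕ) (a b : A) (B : Block arity A R) (t' : Fin (arity B.1) → A) : Prop :=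
  ∃ ht' : t' ∈ R B.1,
    Sum.inr ⟨B.1, t', ht'⟩ ∈ (incGraph arity R).children r (Sum.inl b) ∧
      blockPattern (branchCode r d) b t' = blockPattern (branchCode r d) a B.2.1

open Classical in
noncomputable def partner (d : ℕ) (a b : A) (B : Block arity A R) : Fin (arity B.1) → A :=
  if h : ∃ t', IsPartner r d a b B t' then h.choose else B.2.1

open Classical in
noncomputable def blockFold (φ : A → A → A → A) (a : A) {k : ℕ} (t t' : Fin k → A)
    (x : A) : A :=
  if h : ∃ j, t j ≠ a ∧ Sum.inl x ∈ (incGraph arity R).subtree r (Sum.inl (t j)) then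
    φ (t h.choose) (t' h.choose) x
  else x

open Classical in
noncomputable def branchFold : ℕ → A → A → A → A
  | 0, a, b, x => if x = a then b else x
  | d + 1, a, b, x =>
    if x = a then b
    else if h : ∃ B : Block arity A R, Sum.inr B ∈ (incGraph arity R).children r (Sum.inl a) ∧
        Sum.inl x ∈ (incGraph arity R).subtree r (Sum.inr B) then
      blockFold r (branchFold d) a h.choose.2.1 (partner r d a b h.choose) x
    else x

def IsBranchHom (f : A → A) (a b : A) : Prop :=
  f a = b ∧
    (∀ x, Sum.inl x ∈ (incGraph arity R).subtree r (Sum.inl a) →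
      Sum.inl (f x) ∈ (incGraph arity R).subtree r (Sum.inl b)) ∧
    ∀ B : Block arity A R, Sum.inr B ∈ (incGraph arity R).subtree r (Sum.inl a) →
      f ∘ B.2.1 ∈ R B.1

variable {r} (hT : (incGraph arity R).IsTree)
include hT

lemma coord_eq_or_mem_children {a : A} {B : Block arity A R}
    (hB : Sum.inr B ∈ (incGraph arity R).children r (Sum.inl a)) (j : Fin (arity B.1)) :
    B.2.1 j = a ∨ Sum.inl (B.2.1 j) ∈ (incGraph arity R).children r (Sum.inr B) := by
  have hadj : (incGraph arity R).Adj (Sum.inr B) (Sum.inl (B.2.1 j)) :=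
    incGraph_adj_inr_iff.2 ⟨j, rfl⟩
  rcases hT.dist_eq_dist_add_one_of_adj r hadj with hd | hd
  · left
    exact Sum.inl_injective <| hT.eq_of_adj_of_dist_add_one_eq hadj hB.1.symm hd.symm hB.2.symm
  · exact Or.inr ⟨hadj, hd⟩

lemma exists_coord_mem_subtree {a : A} {B : Block arity A R}
    (hB : Sum.inr B ∈ (incGraph arity R).children r (Sum.inl a)) {u : A ⊕ Block arity A R}
    (hu : u ∈ (incGraph arity R).subtree r (Sum.inr B)) (hne : u ≠ Sum.inr B) :
    ∃ j, B.2.1 j ≠ a ∧ u ∈ (incGraph arity R).subtree r (Sum.inl (B.2.1 j)) := by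
  obtain ⟨w, hw, huw⟩ := hT.connected.exists_child_mem_subtree hu hne
  obtain ⟨j, rfl⟩ := incGraph_adj_inr_iff.1 hw.1
  refine ⟨j, fun hj => ?_, huw⟩
  have := hB.2
  rw [hj] at hw
  have := hw.2
  omega

section blockFold

variable {φ : A → A → A → A} {a b : A} {B : Block arity A R}
  (hB : Sum.inr B ∈ (incGraph arity R).children r (Sum.inl a)) {t' : Fin (arity B.1) → A}
include hB

lemma blockFold_of_not_mem_subtree {x : A}
    (hx : Sum.inl x ∉ (incGraph arity R).subtree r (Sum.inr B)) :
    blockFold r φ a B.2.1 t' x = x := by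
  rw [blockFold, dif_neg]
  rintro ⟨j, hj, hxj⟩
  have hchild := (coord_eq_or_mem_children hT hB j).resolve_left hj
  exact hx (hT.connected.subtree_subset (mem_subtree_of_mem_children hchild) hxj)

variable (hinj : ∀ B : Block arity A R, Function.Injective B.2.1)
include hinj

lemma blockFold_apply {j : Fin (arity B.1)} (hj : B.2.1 j ≠ a) {x : A}
    (hx : Sum.inl x ∈ (incGraph arity R).subtree r (Sum.inl (B.2.1 j))) :
    blockFold r φ a B.2.1 t' x = φ (B.2.1 j) (t' j) x := by
  have h : ∃ j, B.2.1 j ≠ a ∧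
      Sum.inl x ∈ (incGraph arity R).subtree r (Sum.inl (B.2.1 j)) := ⟨j, hj, hx⟩
  have hchild (j) (hj : B.2.1 j ≠ a) := (coord_eq_or_mem_children hT hB j).resolve_left hj
  have : h.choose = j := hinj B <| Sum.inl_injective <|
    hT.eq_of_mem_subtree h.choose_spec.2 hx <| by
      rw [(hchild _ h.choose_spec.1).2, (hchild j hj).2]
  rw [blockFold, dif_pos h, this]

variable (hφ : ∀ j, B.2.1 j ≠ a → IsBranchHom r (φ (B.2.1 j) (t' j)) (B.2.1 j) (t' j))
include hφ

lemma blockFold_apply_coord {j : Fin (arity B.1)} (hj : B.2.1 j ≠ a) :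
    blockFold r φ a B.2.1 t' (B.2.1 j) = t' j := by
  rw [blockFold_apply hT hB hinj hj self_mem_subtree]
  exact (hφ j hj).1

lemma blockFold_comp_mem {C : Block arity A R}
    (hC : Sum.inr C ∈ (incGraph arity R).subtree r (Sum.inr B)) (hne : C ≠ B) :
    blockFold r φ a B.2.1 t' ∘ C.2.1 ∈ R C.1 := by
  obtain ⟨j, hj, hCj⟩ := exists_coord_mem_subtree hT hB hC (by simpa using hne)
  have hcoord (k) : Sum.inl (C.2.1 k) ∈ (incGraph arity R).subtree r (Sum.inl (B.2.1 j)) :=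
    hT.mem_subtree_of_adj hCj (incGraph_adj_inr_iff.2 ⟨k, rfl⟩)
      (fun h => absurd h Sum.inr_ne_inl)
  have : blockFold r φ a B.2.1 t' ∘ C.2.1 = φ (B.2.1 j) (t' j) ∘ C.2.1 :=
    funext fun k => blockFold_apply hT hB hinj hj (hcoord k)
  rw [this]
  exact (hφ j hj).2.2 C hCj

lemma blockFold_mem_subtree (ht' : t' ∈ R B.1)
    (hB' : Sum.inr ⟨B.1, t', ht'⟩ ∈ (incGraph arity R).children r (Sum.inl b))
    (hpat : ∀ j, B.2.1 j = a ↔ t' j = b) {x : A}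
    (hx : Sum.inl x ∈ (incGraph arity R).subtree r (Sum.inr B)) :
    Sum.inl (blockFold r φ a B.2.1 t' x) ∈ (incGraph arity R).subtree r (Sum.inl b) := by
  obtain ⟨j, hj, hxj⟩ := exists_coord_mem_subtree hT hB hx Sum.inl_ne_inr
  rw [blockFold_apply hT hB hinj hj hxj]
  have hchild := (coord_eq_or_mem_children hT hB' j).resolve_left (mt (hpat j).2 hj)
  exact hT.connected.subtree_subset (mem_subtree_of_mem_children hB')
    (hT.connected.subtree_subset (mem_subtree_of_mem_children hchild) ((hφ j hj).2.1 x hxj))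

lemma sHom_blockFold (ht' : t' ∈ R B.1) (hpat : ∀ j, B.2.1 j = a → t' j = a) :
    SHom arity R R (blockFold r φ a B.2.1 t') := by
  rintro i s hs
  by_cases hin : Sum.inr ⟨i, s, hs⟩ ∈ (incGraph arity R).subtree r (Sum.inr B)
  · obtain heq | hne := eq_or_ne (⟨i, s, hs⟩ : Block arity A R) B
    · subst heq
      convert ht' using 1
      funext j
      by_cases hj : s j = a
      · have ha : Sum.inl a ∉ (incGraph arity R).subtree r (Sum.inr ⟨i, s, hs⟩) := by
          intro h
          have := dist_le_of_mem_subtree h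
          have := hB.2
          omega
        rw [Function.comp_apply, hj, blockFold_of_not_mem_subtree hT hB ha, hpat j hj]
      · exact blockFold_apply_coord hT hB hinj hφ hj
    · exact blockFold_comp_mem hT hB hinj hφ hin hne
  · convert hs using 1
    funext k
    refine blockFold_of_not_mem_subtree hT hB fun hk => hin ?_
    exact hT.mem_subtree_of_adj hk (incGraph_adj_inl_inr_iff.2 ⟨k, rfl⟩)
      (fun h => absurd h Sum.inl_ne_inr)

end blockFold

omit hT in
lemma branchFold_apply_self {d : ℕ} {a b : A} : branchFold r d a b a = b := by
  cases d <;> simp [branchFold]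

omit hT in
lemma isPartner_partner {d : ℕ} {a b : A}
    (hcode : branchCode r (d + 1) a = branchCode r (d + 1) b) {B : Block arity A R}
    (hB : Sum.inr B ∈ (incGraph arity R).children r (Sum.inl a)) :
    IsPartner r d a b B (partner r d a b B) := by
  have hmem : ⟨B.1, blockPattern (branchCode r d) a B.2.1⟩ ∈
      (show Set (Σ i : ι, Fin (arity i) → Option (BranchCode ι arity d)) from
        branchCode r (d + 1) b) :=
    hcode ▸ ⟨B, hB, rfl⟩
  obtain ⟨⟨i', t', ht'⟩, hB', heq⟩ := hmem
  obtain ⟨rfl, heq⟩ := Sigma.mk.inj_iff.1 heq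
  have h : ∃ t', IsPartner r d a b B t' := ⟨t', ht', hB', (eq_of_heq heq).symm⟩
  rw [partner, dif_pos h]
  exact h.choose_spec

lemma exists_child_block_mem_subtree {a : A} {u : A ⊕ Block arity A R}
    (hu : u ∈ (incGraph arity R).subtree r (Sum.inl a)) (hne : u ≠ Sum.inl a) :
    ∃ B : Block arity A R, Sum.inr B ∈ (incGraph arity R).children r (Sum.inl a) ∧
      u ∈ (incGraph arity R).subtree r (Sum.inr B) := by
  obtain ⟨w | B, hw, huw⟩ := hT.connected.exists_child_mem_subtree hu hne
  · exact absurd hw.1 not_incGraph_adj_inl_inl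
  · exact ⟨B, hw, huw⟩

lemma branchFold_succ_apply {d : ℕ} {a b : A} {B : Block arity A R}
    (hB : Sum.inr B ∈ (incGraph arity R).children r (Sum.inl a)) {x : A}
    (hx : Sum.inl x ∈ (incGraph arity R).subtree r (Sum.inr B)) :
    branchFold r (d + 1) a b x = blockFold r (branchFold r d) a B.2.1 (partner r d a b B) x := by
  have hxa : x ≠ a := by
    rintro rfl
    have := dist_le_of_mem_subtree hx
    have := hB.2
    omega
  have h : ∃ B : Block arity A R, Sum.inr B ∈ (incGraph arity R).children r (Sum.inl a) ∧
      Sum.inl x ∈ (incGraph arity R).subtree r (Sum.inr B) := ⟨B, hB, hx⟩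
  have hchoose : h.choose = B := Sum.inr_injective <|
    hT.eq_of_mem_subtree h.choose_spec.2 hx (by rw [h.choose_spec.1.2, hB.2])
  rw [branchFold, if_neg hxa, dif_pos h, hchoose]

lemma isBranchHom_branchFold_coord {D d : ℕ}
    (hfold : ∀ a' b' : A,
      (incGraph arity R).dist r (Sum.inl a') = (incGraph arity R).dist r (Sum.inl b') →
      D ≤ (incGraph arity R).dist r (Sum.inl a') + 2 * d →
      branchCode r d a' = branchCode r d b' → IsBranchHom r (branchFold r d a' b') a' b')
    {a b : A} {B : Block arity A R} {t' : Fin (arity B.1) → A} {ht' : t' ∈ R B.1}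
    (hB : Sum.inr B ∈ (incGraph arity R).children r (Sum.inl a))
    (hB' : Sum.inr ⟨B.1, t', ht'⟩ ∈ (incGraph arity R).children r (Sum.inl b))
    (hab : (incGraph arity R).dist r (Sum.inl a) = (incGraph arity R).dist r (Sum.inl b))
    (hfuel : D ≤ (incGraph arity R).dist r (Sum.inl a) + 2 * (d + 1))
    (hpat : blockPattern (branchCode r d) a B.2.1 = blockPattern (branchCode r d) b t')
    (j : Fin (arity B.1)) (hj : B.2.1 j ≠ a) :
    IsBranchHom r (branchFold r d (B.2.1 j) (t' j)) (B.2.1 j) (t' j) := by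
  have h₁ := (coord_eq_or_mem_children hT hB j).resolve_left hj
  have h₂ := (coord_eq_or_mem_children hT hB' j).resolve_left
    (mt (eq_iff_eq_of_blockPattern_eq hpat j).2 hj)
  refine hfold _ _ ?_ ?_ (apply_eq_of_blockPattern_eq hpat hj)
  · rw [h₁.2, h₂.2, hB.2, hB'.2, hab]
  · rw [h₁.2, hB.2]
    omega

lemma isBranchHom_branchFold_succ (hinj : ∀ B : Block arity A R, Function.Injective B.2.1)
    {d : ℕ} {a b : A} (hcode : branchCode r (d + 1) a = branchCode r (d + 1) b)
    (hgrand : ∀ B : Block arity A R, Sum.inr B ∈ (incGraph arity R).children r (Sum.inl a) →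
      ∀ j, B.2.1 j ≠ a → IsBranchHom r (branchFold r d (B.2.1 j) (partner r d a b B j))
        (B.2.1 j) (partner r d a b B j)) :
    IsBranchHom r (branchFold r (d + 1) a b) a b := by
  refine ⟨branchFold_apply_self, fun x hx => ?_, fun C hC => ?_⟩
  · obtain rfl | hxa := eq_or_ne x a
    · rw [branchFold_apply_self]
      exact self_mem_subtree
    obtain ⟨B, hB, hxB⟩ := exists_child_block_mem_subtree hT hx (by simpa using hxa)
    obtain ⟨ht', hB', hpat⟩ := isPartner_partner hcode hB
    rw [branchFold_succ_apply hT hB hxB]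
    exact blockFold_mem_subtree hT hB hinj (hgrand B hB) ht' hB'
      (fun j => (eq_iff_eq_of_blockPattern_eq hpat j).symm) hxB
  obtain ⟨B, hB, hCB⟩ := exists_child_block_mem_subtree hT hC Sum.inr_ne_inl
  obtain rfl | hne := eq_or_ne C B
  · obtain ⟨ht', -, hpat⟩ := isPartner_partner hcode hB
    convert ht' using 1
    funext j
    by_cases hj : C.2.1 j = a
    · rw [Function.comp_apply, hj, branchFold_apply_self]
      exact ((eq_iff_eq_of_blockPattern_eq hpat j).2 hj).symm
    · rw [Function.comp_apply, branchFold_succ_apply hT hB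
        (mem_subtree_of_mem_children ((coord_eq_or_mem_children hT hB j).resolve_left hj))]
      exact blockFold_apply_coord hT hB hinj (hgrand C hB) hj
  · have hcoord (k) : Sum.inl (C.2.1 k) ∈ (incGraph arity R).subtree r (Sum.inr B) :=
      hT.mem_subtree_of_adj hCB (incGraph_adj_inr_iff.2 ⟨k, rfl⟩)
        (fun h => absurd (Sum.inr_injective h) hne)
    have : branchFold r (d + 1) a b ∘ C.2.1 =
        blockFold r (branchFold r d) a B.2.1 (partner r d a b B) ∘ C.2.1 :=
      funext fun k => branchFold_succ_apply hT hB (hcoord k)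
    rw [this]
    exact blockFold_comp_mem hT hB hinj (hgrand B hB) hCB hne

section Fold

variable {D : ℕ} (hD : ∀ v, (incGraph arity R).dist r v ≤ D)
include hD

lemma isBranchHom_branchFold_zero {a b : A}
    (hfuel : D ≤ (incGraph arity R).dist r (Sum.inl a)) :
    IsBranchHom r (branchFold r 0 a b) a b := by
  have hleaf : ∀ u ∈ (incGraph arity R).subtree r (Sum.inl a), u = Sum.inl a := fun u hu => by
    by_contra hne
    have := hT.connected.dist_lt_of_mem_subtree hu hne
    have := hD u
    omega
  refine ⟨branchFold_apply_self, fun x hx => ?_, fun C hC => ?_⟩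
  · cases hleaf _ hx
    rw [branchFold_apply_self]
    exact self_mem_subtree
  · exact absurd (hleaf _ hC) Sum.inr_ne_inl

variable (hinj : ∀ B : Block arity A R, Function.Injective B.2.1)
include hinj

/-- Each unit of fuel descends two levels (element, block, element), so fuel `d` suffices for
branches starting at depth `D - 2 * d` or below. -/
theorem isBranchHom_branchFold (d : ℕ) {a b : A}
    (hab : (incGraph arity R).dist r (Sum.inl a) = (incGraph arity R).dist r (Sum.inl b))
    (hfuel : D ≤ (incGraph arity R).dist r (Sum.inl a) + 2 * d)
    (hcode : branchCode r d a = branchCode r d b) :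
    IsBranchHom r (branchFold r d a b) a b := by
  induction d generalizing a b with
  | zero => exact isBranchHom_branchFold_zero hT hD hfuel
  | succ d ih =>
    refine isBranchHom_branchFold_succ hT hinj hcode fun B hB => ?_
    obtain ⟨ht', hB', hpat⟩ := isPartner_partner hcode hB
    exact isBranchHom_branchFold_coord hT (fun _ _ => ih) hB hB' hab hfuel hpat.symm

/-- Otherwise folding the branch below `B₁` onto the branch below `B₂` gives a non-injective
endomorphism. -/
theorem eq_of_blockPattern_eq {d : ℕ} (hfuel : D ≤ 2 + 2 * d)
    (hcore : ∀ f : A → A, SHom arity R R f → Function.Injective f) {a : A}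
    {B₁ B₂ : Block arity A R}
    (h₁ : Sum.inr B₁ ∈ (incGraph arity R).children r (Sum.inl a))
    (h₂ : Sum.inr B₂ ∈ (incGraph arity R).children r (Sum.inl a))
    (hpat : (⟨B₁.1, blockPattern (branchCode r d) a B₁.2.1⟩ :
        Σ i : ι, Fin (arity i) → Option (BranchCode ι arity d)) =
      ⟨B₂.1, blockPattern (branchCode r d) a B₂.2.1⟩) :
    B₁ = B₂ := by
  obtain ⟨i, t₁, ht₁⟩ := B₁
  obtain ⟨i₂, t₂, ht₂⟩ := B₂
  obtain ⟨rfl, hpat⟩ := Sigma.mk.inj_iff.1 hpat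
  replace hpat := eq_of_heq hpat
  by_contra hne
  have hφ := isBranchHom_branchFold_coord hT (fun _ _ => isBranchHom_branchFold hT hD hinj d)
    h₁ h₂ rfl (by omega) hpat
  have hF := hcore _
    (sHom_blockFold hT h₁ hinj hφ ht₂ (eq_iff_eq_of_blockPattern_eq hpat · |>.1))
  obtain ⟨j, hj⟩ : ∃ j, t₁ j ≠ a := by
    by_contra! hall
    have : t₁ = t₂ := funext fun j =>
      (hall j).trans ((eq_iff_eq_of_blockPattern_eq hpat j).1 (hall j)).symm
    exact hne (by subst this; rfl)
  have c₁ := (coord_eq_or_mem_children hT h₁ j).resolve_left hj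
  have c₂ := (coord_eq_or_mem_children hT h₂ j).resolve_left
    (mt (eq_iff_eq_of_blockPattern_eq hpat j).2 hj)
  have hnot : Sum.inl (t₂ j) ∉ (incGraph arity R).subtree r (Sum.inr ⟨i, t₁, ht₁⟩) :=
    fun h => hne <| Sum.inr_injective <| hT.eq_of_mem_subtree h (mem_subtree_of_mem_children c₂)
      (by rw [h₁.2, h₂.2])
  have := hF ((blockFold_apply_coord hT h₁ hinj hφ hj).trans
    (blockFold_of_not_mem_subtree hT h₁ hnot).symm)
  exact hnot (this ▸ mem_subtree_of_mem_children c₁)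

end Fold

end RootedIncidenceTree

section Counting

variable {ι : Type} {arity : ι → ℕ} {A : Type} {R : ∀ i, Set (Fin (arity i) → A)}
  {r : A ⊕ Block arity A R}

lemma ncard_children_inr_le (B : Block arity A R) :
    ((incGraph arity R).children r (Sum.inr B)).ncard ≤ arity B.1 := by
  have hsub : (incGraph arity R).children r (Sum.inr B) ⊆ Sum.inl '' Set.range B.2.1 :=
    fun v hv => by
      obtain ⟨j, rfl⟩ := incGraph_adj_inr_iff.1 hv.1
      exact ⟨_, ⟨j, rfl⟩, rfl⟩
  calc _ ≤ (Sum.inl '' Set.range B.2.1).ncard := Set.ncard_le_ncard hsub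
    _ ≤ (Set.univ : Set (Fin (arity B.1))).ncard := by
      rw [Set.ncard_image_of_injective _ Sum.inl_injective, ← Set.image_univ]
      exact Set.ncard_image_le
    _ = arity B.1 := by simp

lemma ncard_children_inl_le [Finite ι] [Finite A] (hT : (incGraph arity R).IsTree)
    (hinj : ∀ B : Block arity A R, Function.Injective B.2.1) {D d : ℕ}
    (hD : ∀ v, (incGraph arity R).dist r v ≤ D) (hfuel : D ≤ 2 + 2 * d)
    (hcore : ∀ f : A → A, SHom arity R R f → Function.Injective f) (a : A) :
    ((incGraph arity R).children r (Sum.inl a)).ncard ≤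
      Nat.card (Σ i : ι, Fin (arity i) → Option (BranchCode ι arity d)) := by
  set S := {B : Block arity A R | Sum.inr B ∈ (incGraph arity R).children r (Sum.inl a)}
  have hsub : (incGraph arity R).children r (Sum.inl a) ⊆ Sum.inr '' S := by
    rintro (x | B) hv
    · exact absurd hv.1 not_incGraph_adj_inl_inl
    · exact ⟨B, hv, rfl⟩
  calc _ ≤ (Sum.inr '' S).ncard := Set.ncard_le_ncard hsub
    _ = S.ncard := Set.ncard_image_of_injective _ Sum.inr_injective
    _ ≤ (Set.univ : Set (Σ i : ι, Fin (arity i) → Option (BranchCode ι arity d))).ncard :=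
      Set.ncard_le_ncard_of_injOn (fun B => ⟨B.1, blockPattern (branchCode r d) a B.2.1⟩)
        (fun _ _ => Set.mem_univ _)
        (fun _ h₁ _ h₂ hpat => eq_of_blockPattern_eq hT hD hinj hfuel hcore h₁ h₂ hpat)
    _ = _ := Set.ncard_univ _

theorem IsTreeStruct.nat_card_le_of_core [Fintype ι] [Finite A] {n : ℕ}
    (hT : IsTreeStruct arity R)
    (hdiam : ∀ u v : A ⊕ Block arity A R, (incGraph arity R).dist u v ≤ 2 * n)
    (hcore : ∀ f : A → A, SHom arity R R f → Function.Injective f) :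
    Nat.card A ≤ ∑ d ∈ Finset.range (2 * n + 1),
      (Nat.card (Σ i : ι, Fin (arity i) → Option (BranchCode ι arity n)) +
        Finset.univ.sup arity) ^ d := by
  have hG := hT.isTree
  let r := hG.connected.nonempty.some
  have hC (v : A ⊕ Block arity A R) : ((incGraph arity R).children r v).ncard ≤
      Nat.card (Σ i : ι, Fin (arity i) → Option (BranchCode ι arity n)) +
        Finset.univ.sup arity := by
    rcases v with a | B
    · exact (ncard_children_inl_le hG hT.injective_tuple (hdiam r) (by omega) hcore a).trans
        (Nat.le_add_right _ _)
    · exact (ncard_children_inr_le B).trans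
        ((Finset.le_sup (Finset.mem_univ B.1)).trans (Nat.le_add_left _ _))
  calc Nat.card A ≤ Nat.card (A ⊕ Block arity A R) :=
        Nat.card_le_card_of_injective _ Sum.inl_injective
    _ ≤ _ := hG.connected.nat_card_le_sum_pow hC (hdiam r)

end Counting

theorem exists_equiv_of_nat_card_le {ι : Type} [Finite ι] (arity : ι → ℕ) (N : ℕ) :
    ∃ (k : ℕ) (Cm : Fin k → Type) (S : ∀ m, ∀ i, Set (Fin (arity i) → Cm m)),
      ∀ (A : Type) (R : ∀ i, Set (Fin (arity i) → A)), Finite A → Nat.card A ≤ N →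
        ∃ m, ∃ e : A ≃ Cm m, ∀ i (t : Fin (arity i) → A),
          t ∈ R i ↔ (⇑e ∘ t) ∈ S m i := by
  let Struct := Σ j : Fin (N + 1), ∀ i, Set (Fin (arity i) → Fin j)
  let eS := Finite.equivFin Struct
  refine ⟨Nat.card Struct, fun m => Fin (eS.symm m).1, fun m => (eS.symm m).2, ?_⟩
  intro A R _ hN
  let e := Finite.equivFin A
  let τ : Struct := ⟨⟨Nat.card A, by omega⟩, fun i => {u | e.symm ∘ u ∈ R i}⟩
  refine ⟨eS τ, ?_⟩
  show ∃ e : A ≃ Fin (eS.symm (eS τ)).1,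
    ∀ i t, t ∈ R i ↔ e ∘ t ∈ (eS.symm (eS τ)).2 i
  rw [Equiv.symm_apply_apply]
  exact ⟨e, fun i t => by simp [τ, Function.comp_def]⟩

/-- For every finite vocabulary and every `n`, there are, up to isomorphism, only finitely
many core σ-trees of diameter at most `n` (distance being half the incidence-graph
distance, so diameter `≤ n` means all incidence vertices within `2n` steps). -/
theorem stmt13 (ι : Type) [Fintype ι] (arity : ι → ℕ) (n : ℕ) :
    ∃ (k : ℕ) (Cm : Fin k → Type) (S : ∀ m, ∀ i, Set (Fin (arity i) → Cm m)),
      ∀ (A : Type) (R : ∀ i, Set (Fin (arity i) → A)),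
        Finite A → Nonempty A →
        IsTreeStruct arity R →
        (∀ u v : IncVert arity A R, ReachIn (IncAdj arity R) (2 * n) u v) →
        (∀ f : A → A, SHom arity R R f → Function.Bijective f) →
        ∃ m, ∃ e : A ≃ Cm m, ∀ i (t : Fin (arity i) → A),
          t ∈ R i ↔ (⇑e ∘ t) ∈ S m i := by
  obtain ⟨k, Cm, S, hS⟩ := exists_equiv_of_nat_card_le arity _
  refine ⟨k, Cm, S, fun A R _ _ hT hdiam hcore => hS A R ‹_› ?_⟩
  refine hT.nat_card_le_of_core (n := n) (fun u v => ?_) fun f hf => (hcore f hf).1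
  exact SimpleGraph.dist_le_of_reachIn (G := incGraph arity R) (hdiam u v)
end

section
/- Let A be a finite digraph such that A² dismantles to its diagonal, and let B be a finite digraph. Suppose B × A dismantles in the second coordinate to a substructure C with no element dominated in the second coordinate, and C is the graph {(b, φ(b)) : b ∈ B} of a function φ : B → A. If there exists some homomorphism B → A, then φ itself is a homomorphism from B to A. -/
def ProdRel {α β : Type*} (E : α → α → Prop) (F : β → β → Prop) :
    α × β → α × β → Prop :=
  fun p q => E p.1 q.1 ∧ F p.2 q.2

/-- Dismantling of a product `B × A` in the second coordinate: only elements dominated by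
an element with the same first coordinate are removed. -/
inductive DismantlesSnd {β α : Type*} (Rel : β × α → β × α → Prop) :
    Set (β × α) → Set (β × α) → Prop
  | refl (S : Set (β × α)) : DismantlesSnd Rel S S
  | step {S T : Set (β × α)} (x : β × α) (hx : x ∈ S)
      (hdom : ∃ y ∈ S, y.1 = x.1 ∧ Dominates Rel S y x)
      (h : DismantlesSnd Rel (S \ {x}) T) : DismantlesSnd Rel S T

lemma dismantlesSnd_retract {β α : Type*} (Rel : β × α → β × α → Prop)
    {S T : Set (β × α)} (h : DismantlesSnd Rel S T) :
    ∃ r : β × α → β × α, (∀ p ∈ S, r p ∈ T ∧ (r p).1 = p.1) ∧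
      (∀ p ∈ S, ∀ q ∈ S, Rel p q → Rel (r p) (r q)) := by
  induction h with
  | refl S => exact ⟨id, fun p hp => ⟨hp, rfl⟩, fun p _ q _ h => h⟩
  | @step S T x hx hdom h ih =>
    classical
    obtain ⟨r, hr1, hr2⟩ := ih
    obtain ⟨y, hy, hy1, hyne, hyd, hyz⟩ := hdom
    have hyS : y ∈ S \ {x} := ⟨hy, hyne⟩
    set g : β × α → β × α := fun p => if p = x then y else p with hg
    refine ⟨fun p => r (g p), ?_, ?_⟩
    · intro p hp
      by_cases hpx : p = x
      · simp only [hg, hpx, if_pos rfl]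
        refine ⟨(hr1 y hyS).1, ?_⟩
        rw [(hr1 y hyS).2, hy1]
      · simp only [hg, if_neg hpx]
        exact hr1 p ⟨hp, hpx⟩
    · intro p hp q hq hpq
      have hgp : g p ∈ S \ {x} := by
        by_cases hpx : p = x
        · simpa [hg, hpx] using hyS
        · simp only [hg, if_neg hpx]; exact ⟨hp, hpx⟩
      have hgq : g q ∈ S \ {x} := by
        by_cases hqx : q = x
        · simpa [hg, hqx] using hyS
        · simp only [hg, if_neg hqx]; exact ⟨hq, hqx⟩
      refine hr2 _ hgp _ hgq ?_
      by_cases hpx : p = x <;> by_cases hqx : q = x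
      · subst hpx; subst hqx; simp only [hg, if_pos rfl]; exact hyd hpq
      · subst hpx; simp only [hg, if_pos rfl, if_neg hqx]
        exact (hyz q hq).1 hpq
      · subst hqx; simp only [hg, if_pos rfl, if_neg hpx]
        exact (hyz p hp).2 hpq
      · simpa [hg, if_neg hpx, if_neg hqx] using hpq

/-- Let `A` be a finite digraph whose square dismantles to its diagonal, and `B` a finite
digraph. If `B × A` dismantles in the second coordinate to the graph `C` of a function
`φ : B → A`, with no element of `C` dominated in the second coordinate, and if there is
some homomorphism `B → A`, then `φ` itself is a homomorphism from `B` to `A`. -/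
theorem stmt19 (A B : Type) [Fintype A] [Fintype B]
    (E : A → A → Prop) (F : B → B → Prop)
    (hA : Dismantles (SqRel E) Set.univ {p : A × A | p.1 = p.2})
    (φ : B → A) (C : Set (B × A)) (hC : C = {p : B × A | p.2 = φ p.1})
    (hdis : DismantlesSnd (ProdRel F E) Set.univ C)
    (hnodom : ∀ x ∈ C, ¬ ∃ y ∈ C, y.1 = x.1 ∧ Dominates (ProdRel F E) C y x)
    (hhom : ∃ f : B → A, Hom F E f) :
    Hom F E φ := by
  obtain ⟨f, hf⟩ := hhom
  obtain ⟨r, hr1, hr2⟩ := dismantlesSnd_retract (ProdRel F E) hdis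
  intro u v huv
  have hru := hr1 (u, f u) trivial
  have hrv := hr1 (v, f v) trivial
  have h := hr2 (u, f u) trivial (v, f v) trivial ⟨huv, hf u v huv⟩
  rw [hC] at hru hrv
  have eu : r (u, f u) = (u, φ u) := by
    obtain ⟨h1, h2⟩ := hru
    exact Prod.ext h2 (by rw [h1, h2])
  have ev : r (v, f v) = (v, φ v) := by
    obtain ⟨h1, h2⟩ := hrv
    exact Prod.ext h2 (by rw [h1, h2])
  rw [eu, ev] at h
  exact h.2
end
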